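/- arXiv:2109.06588 — 6 statements merged into one kernel-verified Lean document; each statement's English description precedes it below -/
import Mathlib

section
/- Let A and B be two m×n matrices with real entries. Then |tr(A^* B)| ≤ (tr(|A||B|))^{1/2} · (tr(|A^*||B^*|))^{1/2}. -/
open Matrix

noncomputable section

/-- Real power of a square real matrix via spectral decomposition (defined for
Hermitian/symmetric matrices; junk value `0` otherwise).  For a positive
semidefinite `A` this is the usual power defined by functional calculus. -/
def matPow {n : ℕ} (A : Matrix (Fin n) (Fin n) ℝ) (r : ℝ) : Matrix (Fin n) (Fin n) ℝ :=
  if hA : A.IsHermitian then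
    (hA.eigenvectorUnitary : Matrix (Fin n) (Fin n) ℝ) *
      Matrix.diagonal (fun i => (hA.eigenvalues i) ^ r) *
      (star hA.eigenvectorUnitary : Matrix.unitaryGroup (Fin n) ℝ)
  else 0

/-- Absolute value `|A| = (A^* A)^{1/2}` of a real rectangular matrix. -/
def matAbs {m n : ℕ} (A : Matrix (Fin m) (Fin n) ℝ) : Matrix (Fin n) (Fin n) ℝ :=
  matPow (Aᴴ * A) (1/2)

/-- Operator (spectral) norm of a matrix acting between Euclidean spaces. -/
def matOpNorm {m n : ℕ} (A : Matrix (Fin m) (Fin n) ℝ) : ℝ :=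
  ‖LinearMap.toContinuousLinearMap (Matrix.toEuclideanLin A)‖

/-!
Write `P = (AᴴA)^{1/4} = |A|^{1/2}` and `P' = (AᴴA)^{-1/4}`, its pseudo-inverse (the real power
`x ^ (-1/4)` vanishes at `x = 0`), and similarly `Q, Q'` for `B`. On the range of `Aᴴ` the product
`P P'` is the identity, so with `X = P Q` and `Y = P' Aᴴ B Q'` we get `tr (Xᴴ Y) = tr (Aᴴ B)`,
while `tr (Xᴴ X) = tr (|A| |B|)`. Since `A f(AᴴA) = f(AAᴴ) A` for every `f` (on the finite spectra,
`f` agrees with a polynomial), `A P'² Aᴴ = (AAᴴ)^{1/2} = |Aᴴ|`, whence `tr (Yᴴ Y) = tr (|Aᴴ| |Bᴴ|)`.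
The theorem is then the Cauchy–Schwarz inequality for the Frobenius inner product `tr (Xᴴ Y)`.
-/

open Polynomial

lemma Set.Finite.exists_polynomial_eqOn {F : Type*} [Field F] {s : Set F} (hs : s.Finite)
    (f : F → F) : ∃ p : F[X], s.EqOn p.eval f := by
  classical
  exact ⟨Lagrange.interpolate hs.toFinset id f, fun _ hx =>
    Lagrange.eval_interpolate_at_node f (Set.injOn_id _) (hs.mem_toFinset.2 hx)⟩

namespace Matrix

section Intertwining

variable {R α m n : Type*} [Fintype m] [Fintype n] [DecidableEq m] [DecidableEq n]

lemma mul_pow_eq_pow_mul [Semiring α] {A : Matrix m n α} {M : Matrix n n α} {N : Matrix m m α}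
    (h : A * M = N * A) (k : ℕ) : A * M ^ k = N ^ k * A := by
  induction k with
  | zero => simp
  | succ k ih =>
    rw [pow_succ, pow_succ, ← Matrix.mul_assoc, ih, Matrix.mul_assoc, h, Matrix.mul_assoc]

lemma mul_aeval_eq_aeval_mul [CommSemiring R] [Semiring α] [Algebra R α] {A : Matrix m n α}
    {M : Matrix n n α} {N : Matrix m m α} (h : A * M = N * A) (p : R[X]) :
    A * aeval M p = aeval N p * A := by
  simp only [aeval_eq_sum_range, Matrix.mul_sum, Matrix.sum_mul, Matrix.mul_smul, Matrix.smul_mul,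
    mul_pow_eq_pow_mul h]

end Intertwining

section FunctionalCalculus

variable {𝕜 m n : Type*} [RCLike 𝕜] [Fintype m] [Fintype n] [DecidableEq n]

@[fun_prop]
lemma continuousOn_spectrum (f : ℝ → ℝ) (M : Matrix n n 𝕜) : ContinuousOn f (spectrum ℝ M) :=
  M.finite_real_spectrum.continuousOn f

lemma isHermitian_cfc (f : ℝ → ℝ) (M : Matrix n n 𝕜) : (cfc f M).IsHermitian :=
  cfc_predicate f M

lemma cfc_rpow_mul_cfc_rpow {M : Matrix n n 𝕜} (hM : ∀ x ∈ spectrum ℝ M, 0 ≤ x) {r s : ℝ}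
    (hrs : r + s ≠ 0) :
    cfc (fun x : ℝ => x ^ r) M * cfc (fun x : ℝ => x ^ s) M = cfc (fun x : ℝ => x ^ (r + s)) M := by
  rw [← cfc_mul]
  exact cfc_congr fun x hx => (Real.rpow_add' (hM x hx) hrs).symm

open scoped ComplexOrder in
lemma nonneg_of_mem_spectrum_conjTranspose_mul_self (A : Matrix m n 𝕜) {x : ℝ}
    (hx : x ∈ spectrum ℝ (Aᴴ * A)) : 0 ≤ x := by
  rw [(isHermitian_conjTranspose_mul_self A).spectrum_real_eq_range_eigenvalues] at hx
  obtain ⟨i, rfl⟩ := hx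
  exact (posSemidef_conjTranspose_mul_self A).eigenvalues_nonneg i

lemma mul_cfc_eq_cfc_mul [DecidableEq m] {A : Matrix m n 𝕜} {M : Matrix n n 𝕜}
    {N : Matrix m m 𝕜} (hM : M.IsHermitian) (hN : N.IsHermitian) (h : A * M = N * A)
    (f : ℝ → ℝ) : A * cfc f M = cfc f N * A := by
  obtain ⟨p, hp⟩ := (M.finite_real_spectrum.union N.finite_real_spectrum).exists_polynomial_eqOn f
  rw [← cfc_congr (hp.mono Set.subset_union_left), ← cfc_congr (hp.mono Set.subset_union_right),
    cfc_polynomial p M hM.isSelfAdjoint, cfc_polynomial p N hN.isSelfAdjoint,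
    mul_aeval_eq_aeval_mul h]

lemma mul_cfc_conjTranspose_mul_self_mul_conjTranspose [DecidableEq m] (A : Matrix m n 𝕜)
    (f : ℝ → ℝ) : A * cfc f (Aᴴ * A) * Aᴴ = cfc (fun x => f x * x) (A * Aᴴ) := by
  rw [mul_cfc_eq_cfc_mul (isHermitian_conjTranspose_mul_self A)
    (isHermitian_mul_conjTranspose_self A) (Matrix.mul_assoc _ _ _).symm, Matrix.mul_assoc,
    cfc_mul f _ (A * Aᴴ), cfc_id' ℝ (A * Aᴴ) (isHermitian_mul_conjTranspose_self A).isSelfAdjoint]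

lemma mul_cfc_rpow_conjTranspose_mul_self_mul_conjTranspose [DecidableEq m] (A : Matrix m n 𝕜)
    {r : ℝ} (hr : r + 1 ≠ 0) :
    A * cfc (fun x : ℝ => x ^ r) (Aᴴ * A) * Aᴴ = cfc (fun x : ℝ => x ^ (r + 1)) (A * Aᴴ) := by
  rw [mul_cfc_conjTranspose_mul_self_mul_conjTranspose]
  refine cfc_congr fun x hx => ?_
  have hx0 : 0 ≤ x :=
    nonneg_of_mem_spectrum_conjTranspose_mul_self Aᴴ (by rwa [conjTranspose_conjTranspose])
  rw [Real.rpow_add' hx0 hr, Real.rpow_one]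

open scoped ComplexOrder in
lemma mul_cfc_conjTranspose_mul_self_eq_self (A : Matrix m n 𝕜) {f : ℝ → ℝ}
    (hf : ∀ x ∈ spectrum ℝ (Aᴴ * A), x ≠ 0 → f x = 1) : A * cfc f (Aᴴ * A) = A := by
  have ha : IsSelfAdjoint (Aᴴ * A) := isHermitian_conjTranspose_mul_self A
  set g : ℝ → ℝ := fun x => f x - 1
  have hsub : A * cfc f (Aᴴ * A) - A = A * cfc g (Aᴴ * A) := by
    rw [cfc_sub f (fun _ => 1) (Aᴴ * A), cfc_const_one ℝ (Aᴴ * A), Matrix.mul_sub, Matrix.mul_one]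
  have hzero : (A * cfc g (Aᴴ * A))ᴴ * (A * cfc g (Aᴴ * A)) = 0 :=
    calc (A * cfc g (Aᴴ * A))ᴴ * (A * cfc g (Aᴴ * A))
        = cfc g (Aᴴ * A) * (Aᴴ * A) * cfc g (Aᴴ * A) := by
          rw [conjTranspose_mul, (isHermitian_cfc g _).eq]
          simp only [Matrix.mul_assoc]
      _ = cfc (fun x => g x * x * g x) (Aᴴ * A) := by rw [cfc_mul, cfc_mul, cfc_id' ℝ (Aᴴ * A)]
      _ = cfc (0 : ℝ → ℝ) (Aᴴ * A) := cfc_congr fun x hx => by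
          by_cases hx0 : x = 0
          · simp [hx0]
          · simp [g, hf x hx hx0]
      _ = 0 := cfc_zero ℝ (Aᴴ * A)
  rw [← sub_eq_zero, hsub]
  exact conjTranspose_mul_self_eq_zero.mp hzero

lemma mul_cfc_rpow_neg_mul_cfc_rpow (A : Matrix m n 𝕜) (r : ℝ) :
    A * (cfc (fun x : ℝ => x ^ (-r)) (Aᴴ * A) * cfc (fun x : ℝ => x ^ r) (Aᴴ * A)) = A := by
  rw [← cfc_mul]
  refine mul_cfc_conjTranspose_mul_self_eq_self A fun x hx hx0 => ?_
  rw [← Real.rpow_add ((nonneg_of_mem_spectrum_conjTranspose_mul_self A hx).lt_of_ne' hx0),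
    neg_add_cancel, Real.rpow_zero]

end FunctionalCalculus

section Trace

variable {m n : Type*} [Fintype m] [Fintype n]

lemma trace_conjTranspose_mul_eq_sum (X Y : Matrix m n ℝ) :
    trace (Xᴴ * Y) = ∑ ij : m × n, X ij.1 ij.2 * Y ij.1 ij.2 := by
  simp only [trace, diag, mul_apply, conjTranspose_apply, star_trivial, Fintype.sum_prod_type]
  exact Finset.sum_comm

lemma abs_trace_conjTranspose_mul_le (X Y : Matrix m n ℝ) :
    |trace (Xᴴ * Y)| ≤ √(trace (Xᴴ * X)) * √(trace (Yᴴ * Y)) := by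
  simp only [trace_conjTranspose_mul_eq_sum, ← pow_two]
  rw [← Real.sqrt_mul (Finset.sum_nonneg fun _ _ => sq_nonneg _)]
  exact Real.abs_le_sqrt (Finset.sum_mul_sq_le_sq_mul_sq _ _ _)

lemma abs_trace_conjTranspose_mul_le_of_mul_mul_eq_self {A B : Matrix m n ℝ}
    {P P' Q Q' : Matrix n n ℝ} (hP : P.IsHermitian) (hP' : P'.IsHermitian) (hQ : Q.IsHermitian)
    (hQ' : Q'.IsHermitian) (hA : A * (P' * P) = A) (hB : B * (Q' * Q) = B) :
    |trace (Aᴴ * B)| ≤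
      √(trace (P * P * (Q * Q))) * √(trace (A * (P' * P') * Aᴴ * (B * (Q' * Q') * Bᴴ))) := by
  have hA' : P * (P' * Aᴴ) = Aᴴ := by
    simpa only [conjTranspose_mul, hP.eq, hP'.eq, Matrix.mul_assoc] using congr_arg (·ᴴ) hA
  have hXY : trace ((P * Q)ᴴ * (P' * Aᴴ * B * Q')) = trace (Aᴴ * B) :=
    calc trace ((P * Q)ᴴ * (P' * Aᴴ * B * Q')) = trace (P * (P' * Aᴴ) * (B * (Q' * Q))) := by
          rw [conjTranspose_mul, hP.eq, hQ.eq, Matrix.mul_assoc, trace_mul_comm]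
          simp only [Matrix.mul_assoc]
      _ = trace (Aᴴ * B) := by rw [hA', hB]
  have hXX : trace ((P * Q)ᴴ * (P * Q)) = trace (P * P * (Q * Q)) := by
    rw [conjTranspose_mul, hP.eq, hQ.eq, Matrix.mul_assoc, trace_mul_comm]
    simp only [Matrix.mul_assoc]
  have hYY : trace ((P' * Aᴴ * B * Q')ᴴ * (P' * Aᴴ * B * Q')) =
      trace (A * (P' * P') * Aᴴ * (B * (Q' * Q') * Bᴴ)) := by
    simp only [conjTranspose_mul, hP'.eq, hQ'.eq, conjTranspose_conjTranspose, Matrix.mul_assoc]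
    rw [trace_mul_comm Q']
    simp only [Matrix.mul_assoc]
    rw [trace_mul_comm Bᴴ]
    simp only [Matrix.mul_assoc]
  rw [← hXY, ← hXX, ← hYY]
  exact abs_trace_conjTranspose_mul_le _ _

variable [DecidableEq m] [DecidableEq n]

lemma abs_trace_conjTranspose_mul_le_sqrt_trace_cfc_sqrt (A B : Matrix m n ℝ) :
    |trace (Aᴴ * B)| ≤ √(trace (cfc Real.sqrt (Aᴴ * A) * cfc Real.sqrt (Bᴴ * B))) *
      √(trace (cfc Real.sqrt (A * Aᴴ) * cfc Real.sqrt (B * Bᴴ))) := by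
  have habs {C : Matrix m n ℝ} :
      cfc (fun x : ℝ => x ^ (1/4 : ℝ)) (Cᴴ * C) * cfc (fun x : ℝ => x ^ (1/4 : ℝ)) (Cᴴ * C) =
        cfc Real.sqrt (Cᴴ * C) := by
    rw [cfc_rpow_mul_cfc_rpow (fun _ => nonneg_of_mem_spectrum_conjTranspose_mul_self C)
      (by norm_num)]
    exact cfc_congr fun x _ => by norm_num [Real.sqrt_eq_rpow]
  have habs_conjTranspose {C : Matrix m n ℝ} :
      C * (cfc (fun x : ℝ => x ^ (-(1/4) : ℝ)) (Cᴴ * C) *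
        cfc (fun x : ℝ => x ^ (-(1/4) : ℝ)) (Cᴴ * C)) * Cᴴ =
        cfc Real.sqrt (C * Cᴴ) := by
    rw [cfc_rpow_mul_cfc_rpow (fun _ => nonneg_of_mem_spectrum_conjTranspose_mul_self C)
      (by norm_num), mul_cfc_rpow_conjTranspose_mul_self_mul_conjTranspose C (by norm_num)]
    exact cfc_congr fun x _ => by norm_num [Real.sqrt_eq_rpow]
  rw [← habs, ← habs, ← habs_conjTranspose, ← habs_conjTranspose]
  exact abs_trace_conjTranspose_mul_le_of_mul_mul_eq_self (isHermitian_cfc _ _)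
    (isHermitian_cfc _ _) (isHermitian_cfc _ _) (isHermitian_cfc _ _)
    (mul_cfc_rpow_neg_mul_cfc_rpow A (1/4)) (mul_cfc_rpow_neg_mul_cfc_rpow B (1/4))

end Trace

end Matrix

lemma matPow_eq_cfc {k : ℕ} {M : Matrix (Fin k) (Fin k) ℝ} (hM : M.IsHermitian) (r : ℝ) :
    matPow M r = cfc (fun x : ℝ => x ^ r) M := by
  rw [matPow, dif_pos hM, hM.cfc_eq, IsHermitian.cfc, Unitary.conjStarAlgAut_apply]
  rfl

lemma matAbs_eq_cfc_sqrt {m n : ℕ} (A : Matrix (Fin m) (Fin n) ℝ) :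
    matAbs A = cfc Real.sqrt (Aᴴ * A) := by
  rw [matAbs, matPow_eq_cfc (isHermitian_conjTranspose_mul_self A)]
  exact cfc_congr fun x _ => (Real.sqrt_eq_rpow x).symm

/-- **Matrix Cauchy–Schwarz inequality** (Theorem 2.1):
for real $m×n$ matrices $A, B$,
$|tr(A^*B)| ≤ (tr(|A||B|))^{1/2} (tr(|A^*||B^*|))^{1/2}$. -/
theorem matrix_cauchy_schwarz_trace {m n : ℕ} (A B : Matrix (Fin m) (Fin n) ℝ) :
    |Matrix.trace (Aᴴ * B)| ≤
      (Matrix.trace (matAbs A * matAbs B)) ^ ((1 : ℝ)/2) *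
        (Matrix.trace (matAbs Aᴴ * matAbs Bᴴ)) ^ ((1 : ℝ)/2) := by
  simp only [matAbs_eq_cfc_sqrt, conjTranspose_conjTranspose, ← Real.sqrt_eq_rpow]
  exact abs_trace_conjTranspose_mul_le_sqrt_trace_cfc_sqrt A B
end
end

section
/- Let A be a real n×n matrix. Then |tr(A)| ≤ tr(|A|), and equality holds if and only if A is symmetric and semi-definite (positive semidefinite or negative semidefinite). In particular, tr(A) = tr(|A|) if and only if A is symmetric and positive semidefinite. -/
open Matrix

noncomputable section

/-- The square root of a positive semidefinite real matrix (as in older Mathlib). -/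
def Matrix.PosSemidef.sqrt {n : ℕ} {A : Matrix (Fin n) (Fin n) ℝ} (hA : A.PosSemidef) :
    Matrix (Fin n) (Fin n) ℝ :=
  (hA.1.eigenvectorUnitary : Matrix (Fin n) (Fin n) ℝ) *
    Matrix.diagonal (RCLike.ofReal ∘ Real.sqrt ∘ hA.1.eigenvalues : Fin n → ℝ) *
    (star hA.1.eigenvectorUnitary : Matrix.unitaryGroup (Fin n) ℝ)

open scoped MatrixOrder in
lemma Matrix.PosSemidef.eq_sqrt_of_sq_eq {n : ℕ} {A : Matrix (Fin n) (Fin n) ℝ}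
    (hA : A.PosSemidef) {B : Matrix (Fin n) (Fin n) ℝ} (hB : B.PosSemidef) (hAB : A ^ 2 = B) :
    A = hB.sqrt := by
  have h1 : CFC.sqrt B = A := CFC.sqrt_unique (by rw [← hAB, sq]) hA.nonneg
  rw [← h1, CFC.sqrt_eq_real_sqrt B hB.nonneg, cfcₙ_eq_cfc, hB.1.cfc_eq, Matrix.IsHermitian.cfc,
    Unitary.conjStarAlgAut_apply]
  rfl

lemma aux_trace_conj {n : ℕ} (W : Matrix.unitaryGroup (Fin n) ℝ) (f : Fin n → ℝ) :
    Matrix.trace ((W : Matrix (Fin n) (Fin n) ℝ) * Matrix.diagonal f *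
      (star W : Matrix (Fin n) (Fin n) ℝ)) = ∑ i, f i := by
  rw [Matrix.trace_mul_cycle]
  rw [Matrix.mem_unitaryGroup_iff'.mp W.2, one_mul, Matrix.trace_diagonal]

lemma aux_matAbs_eq_sqrt {n : ℕ} (A : Matrix (Fin n) (Fin n) ℝ) :
    matAbs A = (Matrix.posSemidef_conjTranspose_mul_self A : (Aᴴ * A).PosSemidef).sqrt := by
  rw [matAbs, matPow, dif_pos (Matrix.isHermitian_conjTranspose_mul_self A), Matrix.PosSemidef.sqrt]
  congr 1
  congr 1
  refine congrArg (fun g : Fin n → ℝ => Matrix.diagonal g) (funext fun i => ?_)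
  simp [Real.sqrt_eq_rpow, one_div, RCLike.ofReal_real_eq_id]

lemma aux_psd_trace_zero {n : ℕ} {B : Matrix (Fin n) (Fin n) ℝ} (hB : B.PosSemidef)
    (h : B.trace = 0) : B = 0 := by
  have hB1 := hB.1
  have hspec := hB1.spectral_theorem
  have hco : (RCLike.ofReal ∘ hB1.eigenvalues : Fin n → ℝ) = hB1.eigenvalues := by
    funext i; simp [RCLike.ofReal_real_eq_id]
  rw [hco] at hspec
  have ht : B.trace = ∑ i, hB1.eigenvalues i := by
    conv_lhs => rw [hspec]
    exact aux_trace_conj _ _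
  have hzero : ∀ i ∈ Finset.univ, hB1.eigenvalues i = 0 :=
    (Finset.sum_eq_zero_iff_of_nonneg fun i _ => hB.eigenvalues_nonneg i).mp (ht ▸ h)
  have : hB1.eigenvalues = 0 := funext fun i => hzero i (Finset.mem_univ i)
  rw [hspec, this]
  show _ * Matrix.diagonal (0 : Fin n → ℝ) * _ = _
  rw [show Matrix.diagonal (0 : Fin n → ℝ) = 0 from Matrix.diagonal_zero, mul_zero, zero_mul]

/-- **Equality case in |tr A| ≤ tr |A|** (Example 2.7): for a real n×n matrix A,
|tr(A)| ≤ tr(|A|); equality holds iff A is symmetric and semi-definite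
(positive semidefinite or negative semidefinite).  In particular
tr(A) = tr(|A|) iff A is symmetric positive semidefinite. -/
theorem trace_le_trace_abs_with_equality_cases {n : ℕ} (A : Matrix (Fin n) (Fin n) ℝ) :
    |Matrix.trace A| ≤ Matrix.trace (matAbs A) ∧
    (|Matrix.trace A| = Matrix.trace (matAbs A) ↔
      A.IsSymm ∧ (A.PosSemidef ∨ (-A).PosSemidef)) ∧
    (Matrix.trace A = Matrix.trace (matAbs A) ↔ A.PosSemidef) := by
  classical
  have hPSD : (Aᴴ * A).PosSemidef := Matrix.posSemidef_conjTranspose_mul_self A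
  have hB : (Aᴴ * A).IsHermitian := hPSD.1
  have habs : matAbs A = hPSD.sqrt := aux_matAbs_eq_sqrt A
  set U : Matrix (Fin n) (Fin n) ℝ := (hB.eigenvectorUnitary : Matrix (Fin n) (Fin n) ℝ) with hUdef
  set d : Fin n → ℝ := hB.eigenvalues with hddef
  have hdnn : ∀ i, 0 ≤ d i := hPSD.eigenvalues_nonneg
  have hUU : star U * U = 1 := Matrix.mem_unitaryGroup_iff'.mp hB.eigenvectorUnitary.2
  have hUU' : U * star U = 1 := Matrix.mem_unitaryGroup_iff.mp hB.eigenvectorUnitary.2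
  have hspec : Aᴴ * A = U * Matrix.diagonal d * star U := by
    have h := hB.spectral_theorem
    have hco : (RCLike.ofReal ∘ hB.eigenvalues : Fin n → ℝ) = d := by
      funext i; simp [RCLike.ofReal_real_eq_id, hddef]
    rw [hco] at h
    exact h
  set v : Fin n → Fin n → ℝ := fun i j => U j i with hvdef
  have hvv : ∀ i, dotProduct (v i) (v i) = 1 := by
    intro i
    have h := congrFun (congrFun hUU i) i
    simpa [Matrix.mul_apply, Matrix.one_apply, dotProduct, Matrix.star_apply] using h
  have heig : ∀ i, (Aᴴ * A) *ᵥ v i = d i • v i := by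
    intro i
    have h1 : (Aᴴ * A) * U = U * Matrix.diagonal d := by
      rw [hspec, mul_assoc, hUU, mul_one]
    funext j
    have h := congrFun (congrFun h1 j) i
    rw [Matrix.mul_apply, Matrix.mul_diagonal] at h
    show dotProduct _ _ = _
    simp only [dotProduct, Pi.smul_apply, smul_eq_mul]
    exact h.trans (mul_comm _ _)
  set c : Fin n → ℝ := fun i => dotProduct (v i) (A *ᵥ v i) with hcdef
  have hww : ∀ i, dotProduct (A *ᵥ v i) (A *ᵥ v i) = d i := by
    intro i
    have h1 : dotProduct (v i) ((Aᴴ * A) *ᵥ v i) = d i := by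
      rw [heig i, dotProduct_smul, hvv i, smul_eq_mul, mul_one]
    calc dotProduct (A *ᵥ v i) (A *ᵥ v i)
        = dotProduct (v i ᵥ* Aᴴ) (A *ᵥ v i) := by
          rw [Matrix.vecMul_conjTranspose]; simp
      _ = dotProduct (v i) ((Aᴴ * A) *ᵥ v i) := by
          rw [← dotProduct_mulVec, Matrix.mulVec_mulVec]
      _ = d i := h1
  have htrA : Matrix.trace A = ∑ i, c i := by
    have h1 : Matrix.trace (star U * A * U) = Matrix.trace A := by
      rw [Matrix.trace_mul_cycle, hUU', one_mul]
    have h2 : ∀ i, (star U * A * U) i i = c i := by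
      intro i
      simp only [Matrix.mul_apply, Matrix.star_apply, star_trivial, dotProduct,
        Matrix.mulVec, hcdef, Finset.sum_mul, Finset.mul_sum]
      rw [Finset.sum_comm]
      exact Finset.sum_congr rfl fun k _ => Finset.sum_congr rfl fun j _ => by ring
    rw [← h1, Matrix.trace]
    exact Finset.sum_congr rfl fun i _ => (h2 i).trans rfl
  have hsub : ∀ i, dotProduct (A *ᵥ v i - c i • v i) (A *ᵥ v i - c i • v i)
      = d i - c i ^ 2 := by
    intro i
    have h1 : dotProduct (v i) (A *ᵥ v i) = c i := rfl
    have h2 : dotProduct (A *ᵥ v i) (v i) = c i := (dotProduct_comm _ _).trans h1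
    simp only [dotProduct_sub, sub_dotProduct, dotProduct_smul,
      smul_dotProduct, smul_eq_mul, hww i, hvv i, h1, h2]
    ring
  have hcd : ∀ i, c i ^ 2 ≤ d i := by
    intro i
    have h0 : 0 ≤ dotProduct (A *ᵥ v i - c i • v i) (A *ᵥ v i - c i • v i) :=
      Finset.sum_nonneg fun j _ => mul_self_nonneg _
    rw [hsub i] at h0
    linarith
  have habs_le : ∀ i, |c i| ≤ Real.sqrt (d i) := by
    intro i
    rw [← Real.sqrt_sq_eq_abs]
    exact Real.sqrt_le_sqrt (hcd i)
  have htrAbs : Matrix.trace (matAbs A) = ∑ i, Real.sqrt (d i) := by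
    rw [habs, Matrix.PosSemidef.sqrt]
    have hco : (RCLike.ofReal ∘ Real.sqrt ∘ hPSD.1.eigenvalues : Fin n → ℝ)
        = fun i => Real.sqrt (d i) := by
      funext i; simp [RCLike.ofReal_real_eq_id, hddef]
    rw [hco]
    exact aux_trace_conj _ _
  have hineq : |Matrix.trace A| ≤ Matrix.trace (matAbs A) := by
    rw [htrA, htrAbs]
    calc |∑ i, c i| ≤ ∑ i, |c i| := Finset.abs_sum_le_sum_abs _ _
      _ ≤ ∑ i, Real.sqrt (d i) := Finset.sum_le_sum fun i _ => habs_le i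
  have hAbsPSD_eq : A.PosSemidef → matAbs A = A := by
    intro h
    rw [habs]
    exact (h.eq_sqrt_of_sq_eq hPSD (by rw [pow_two, h.1])).symm
  have hAbsNSD_eq : (-A).PosSemidef → matAbs A = -A := by
    intro h
    have hAH : Aᴴ = A := by
      have h1 : (-A)ᴴ = -A := h.1
      rwa [Matrix.conjTranspose_neg, neg_inj] at h1
    rw [habs]
    exact (h.eq_sqrt_of_sq_eq hPSD (by rw [neg_sq, pow_two, hAH])).symm
  have hforward : |Matrix.trace A| = Matrix.trace (matAbs A) →
      A.IsSymm ∧ (A.PosSemidef ∨ (-A).PosSemidef) := by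
    intro h
    rw [htrA, htrAbs] at h
    have hsum1 : ∑ i, |c i| = ∑ i, Real.sqrt (d i) :=
      le_antisymm (Finset.sum_le_sum fun i _ => habs_le i)
        (h ▸ Finset.abs_sum_le_sum_abs _ _)
    have heach : ∀ i, |c i| = Real.sqrt (d i) := by
      have h' := (Finset.sum_eq_sum_iff_of_le (fun i _ => habs_le i)).1 hsum1
      exact fun i => h' i (Finset.mem_univ i)
    have hceq : ∀ i, c i ^ 2 = d i := by
      intro i
      have h' := congrArg (fun x : ℝ => x ^ 2) (heach i)
      simpa [Real.sq_sqrt (hdnn i), sq_abs] using h'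
    have heigA : ∀ i, A *ᵥ v i = c i • v i := by
      intro i
      have h0 : dotProduct (A *ᵥ v i - c i • v i) (A *ᵥ v i - c i • v i) = 0 := by
        rw [hsub i, hceq i, sub_self]
      exact sub_eq_zero.mp (dotProduct_self_eq_zero.mp h0)
    have hAU : A = U * Matrix.diagonal c * star U := by
      have h1 : A * U = U * Matrix.diagonal c := by
        ext j i
        rw [Matrix.mul_apply, Matrix.mul_diagonal]
        have h' := congrFun (heigA i) j
        simp only [Matrix.mulVec, dotProduct, Pi.smul_apply, smul_eq_mul] at h'
        exact h'.trans (mul_comm _ _)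
      calc A = A * (U * star U) := by rw [hUU', mul_one]
        _ = (A * U) * star U := by rw [mul_assoc]
        _ = U * Matrix.diagonal c * star U := by rw [h1]
    have hherm : A.IsHermitian := by
      rw [hAU, Matrix.star_eq_conjTranspose]
      exact Matrix.isHermitian_mul_mul_conjTranspose U (Matrix.isHermitian_diagonal c)
    have hsymm : A.IsSymm := by
      ext i j
      have h' := congrFun (congrFun hherm.eq i) j
      simpa [Matrix.conjTranspose_apply] using h'
    refine ⟨hsymm, ?_⟩
    rcases le_or_gt 0 (Matrix.trace A) with hpos | hneg
    · left
      have habs0 : |∑ i, c i| = ∑ i, c i := abs_of_nonneg (by rwa [htrA] at hpos)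
      have h2 : ∑ i, c i = ∑ i, |c i| := by rw [← habs0, h, ← hsum1]
      have hcc : ∀ i, 0 ≤ c i := by
        have h' := (Finset.sum_eq_sum_iff_of_le (fun i _ => le_abs_self (c i))).1 h2
        intro i
        have := h' i (Finset.mem_univ i)
        exact this ▸ abs_nonneg (c i)
      rw [hAU, Matrix.star_eq_conjTranspose]
      exact (Matrix.posSemidef_diagonal_iff.mpr hcc).mul_mul_conjTranspose_same U
    · right
      have habs0 : |∑ i, c i| = ∑ i, -c i := by
        rw [abs_of_neg (by rwa [htrA] at hneg), ← Finset.sum_neg_distrib]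
      have h2 : ∑ i, -c i = ∑ i, |c i| := by rw [← habs0, h, ← hsum1]
      have hcc : ∀ i, 0 ≤ -c i := by
        have h' := (Finset.sum_eq_sum_iff_of_le (fun i _ => neg_le_abs (c i))).1 h2
        intro i
        have := h' i (Finset.mem_univ i)
        exact this ▸ abs_nonneg (c i)
      have hAU' : -A = U * Matrix.diagonal (fun i => -c i) * star U := by
        have hdn : Matrix.diagonal (fun i => -c i) = -Matrix.diagonal c := (Matrix.diagonal_neg c).symm
        rw [hAU, hdn, mul_neg, neg_mul]
      rw [hAU', Matrix.star_eq_conjTranspose]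
      exact (Matrix.posSemidef_diagonal_iff.mpr hcc).mul_mul_conjTranspose_same U
  have h0abs : 0 ≤ Matrix.trace (matAbs A) := by
    rw [htrAbs]; exact Finset.sum_nonneg fun i _ => Real.sqrt_nonneg _
  refine ⟨hineq, ⟨hforward, ?_⟩, ?_, ?_⟩
  · rintro ⟨hsymm, hP | hN⟩
    · have h1 : Matrix.trace A = Matrix.trace (matAbs A) := by rw [hAbsPSD_eq hP]
      rw [← h1] at h0abs ⊢
      exact abs_of_nonneg h0abs
    · have h1 : Matrix.trace (matAbs A) = -Matrix.trace A := by
        rw [hAbsNSD_eq hN, Matrix.trace_neg]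
      rw [h1]
      exact abs_of_nonpos (by rw [h1] at h0abs; linarith)
  · intro h
    have htrnn : 0 ≤ Matrix.trace A := by rw [h]; exact h0abs
    have heq : |Matrix.trace A| = Matrix.trace (matAbs A) := by
      rw [abs_of_nonneg htrnn]; exact h
    obtain ⟨hsymm, hP | hN⟩ := hforward heq
    · exact hP
    · have hEq := hAbsNSD_eq hN
      have htr0 : Matrix.trace A = 0 := by
        have h' := h
        rw [hEq, Matrix.trace_neg] at h'
        linarith
      have hA0 : -A = 0 := aux_psd_trace_zero hN (by rw [Matrix.trace_neg, htr0, neg_zero])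
      have hA0' : A = 0 := by rwa [neg_eq_zero] at hA0
      rw [hA0']
      exact Matrix.PosSemidef.zero
  · intro hP
    rw [hAbsPSD_eq hP]
end
end

section
/- Let A and B be real m×n matrices with operator norm ‖B‖ ≤ 1. Then tr(A^* B) = tr(|A|) holds if and only if A^* B is symmetric and positive semidefinite and A^* B B^* A = A^* A. Moreover, if A ≠ 0 and tr(A^* B) = tr(|A|), then ‖B‖ = 1. -/
open Matrix

noncomputable section

lemma norm_euclid {k : ℕ} (y : Fin k → ℝ) :
    ‖(WithLp.equiv 2 (Fin k → ℝ)).symm y‖ = Real.sqrt (y ⬝ᵥ y) := by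
  rw [EuclideanSpace.norm_eq]
  congr 1
  simp [dotProduct, ← sq, Real.norm_eq_abs, sq_abs]

lemma matOpNorm_nonneg {m n : ℕ} (B : Matrix (Fin m) (Fin n) ℝ) : 0 ≤ matOpNorm B :=
  norm_nonneg _

lemma matOpNorm_bound {m n : ℕ} (B : Matrix (Fin m) (Fin n) ℝ) (x : Fin n → ℝ) :
    Real.sqrt ((B *ᵥ x) ⬝ᵥ (B *ᵥ x)) ≤ matOpNorm B * Real.sqrt (x ⬝ᵥ x) := by
  have h := (LinearMap.toContinuousLinearMap (Matrix.toEuclideanLin B)).le_opNorm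
    ((WithLp.equiv 2 (Fin n → ℝ)).symm x)
  have e1 := norm_euclid (B *ᵥ x)
  have e2 := norm_euclid x
  simp only [WithLp.equiv_symm_apply] at e1 e2
  simpa [matOpNorm, e1, e2, Matrix.toEuclideanLin_apply_piLp_toLp] using h

lemma matOpNorm_ge {m n : ℕ} (B : Matrix (Fin m) (Fin n) ℝ) (x : Fin n → ℝ)
    (hx : x ⬝ᵥ x = 1) (hBx : (B *ᵥ x) ⬝ᵥ (B *ᵥ x) = 1) : 1 ≤ matOpNorm B := by
  have h := matOpNorm_bound B x
  rw [hx, hBx, Real.sqrt_one, mul_one] at h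
  exact h

lemma dp_self_nonneg {k : ℕ} (v : Fin k → ℝ) : 0 ≤ v ⬝ᵥ v :=
  Finset.sum_nonneg fun i _ => mul_self_nonneg _

lemma one_sub_posSemidef {m n : ℕ} (B : Matrix (Fin m) (Fin n) ℝ)
    (hB : matOpNorm B ≤ 1) : ((1 : Matrix (Fin n) (Fin n) ℝ) - Bᴴ * B).PosSemidef := by
  refine PosSemidef.of_dotProduct_mulVec_nonneg ?_ ?_
  · exact (isHermitian_one).sub (isHermitian_conjTranspose_mul_self B)
  · intro x
    have hx : star x = x := by simp
    have key : (B *ᵥ x) ⬝ᵥ (B *ᵥ x) ≤ x ⬝ᵥ x := by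
      have h := matOpNorm_bound B x
      have h1 : Real.sqrt ((B *ᵥ x) ⬝ᵥ (B *ᵥ x)) ≤ Real.sqrt (x ⬝ᵥ x) := by
        calc Real.sqrt ((B *ᵥ x) ⬝ᵥ (B *ᵥ x)) ≤ matOpNorm B * Real.sqrt (x ⬝ᵥ x) := h
        _ ≤ 1 * Real.sqrt (x ⬝ᵥ x) := by
            exact mul_le_mul_of_nonneg_right hB (Real.sqrt_nonneg _)
        _ = Real.sqrt (x ⬝ᵥ x) := one_mul _
      nlinarith [Real.sq_sqrt (dp_self_nonneg (B *ᵥ x)),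
        Real.sq_sqrt (dp_self_nonneg x), Real.sqrt_nonneg ((B *ᵥ x) ⬝ᵥ (B *ᵥ x)),
        Real.sqrt_nonneg (x ⬝ᵥ x)]
    have expand : x ⬝ᵥ ((1 - Bᴴ * B) *ᵥ x) = x ⬝ᵥ x - (B *ᵥ x) ⬝ᵥ (B *ᵥ x) := by
      rw [sub_mulVec, dotProduct_sub, one_mulVec]
      congr 1
      rw [← mulVec_mulVec, dotProduct_mulVec, vecMul_conjTranspose]
      simp
    rw [hx, expand]
    linarith


open scoped MatrixOrder

lemma matAbs_eq_sqrt {m n : ℕ} (A : Matrix (Fin m) (Fin n) ℝ) :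
    matAbs A = CFC.sqrt (Aᴴ * A) := by
  have hA := posSemidef_conjTranspose_mul_self A
  rw [matAbs, matPow, dif_pos hA.1, CFC.sqrt_eq_cfc, cfc_nnreal_eq_real _ (Aᴴ * A),
    hA.1.cfc_eq, IsHermitian.cfc, Unitary.conjStarAlgAut_apply]
  congr 3
  funext i
  have := hA.eigenvalues_nonneg i
  simp [Real.sqrt_eq_rpow] at this ⊢
  rw [max_eq_left this]

lemma cross_entry {m n : ℕ} (M N : Matrix (Fin m) (Fin n) ℝ) (i j : Fin n) :
    (Mᴴ * N) i j = Mᵀ i ⬝ᵥ Nᵀ j := by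
  simp [Matrix.mul_apply, Matrix.conjTranspose_apply, dotProduct, Matrix.transpose_apply]

lemma key {m n : ℕ} (A B : Matrix (Fin m) (Fin n) ℝ) (hB : matOpNorm B ≤ 1)
    (htr : Matrix.trace (Aᴴ * B) = Matrix.trace (matAbs A)) :
    Aᴴ * B = matAbs A ∧ (A ≠ 0 → matOpNorm B = 1) := by
  have hH := posSemidef_conjTranspose_mul_self A
  set hHerm : (Aᴴ * A).IsHermitian := hH.1 with hHerm_def
  set Q : Matrix (Fin n) (Fin n) ℝ := (hHerm.eigenvectorUnitary : Matrix (Fin n) (Fin n) ℝ)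
    with hQ_def
  set lam : Fin n → ℝ := hHerm.eigenvalues with hlam_def
  have hlam_nonneg : ∀ i, 0 ≤ lam i := fun i => hH.eigenvalues_nonneg i
  have hQ1 : Qᴴ * Q = 1 := by
    rw [← Matrix.star_eq_conjTranspose]
    exact mem_unitaryGroup_iff'.mp hHerm.eigenvectorUnitary.2
  have hQ2 : Q * Qᴴ = 1 := by
    rw [← Matrix.star_eq_conjTranspose]
    exact mem_unitaryGroup_iff.mp hHerm.eigenvectorUnitary.2
  -- spectral theorem
  have hspec : Qᴴ * (Aᴴ * A) * Q = Matrix.diagonal lam := by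
    rw [← Matrix.star_eq_conjTranspose]
    have := hHerm.conjStarAlgAut_star_eigenvectorUnitary
    simpa [RCLike.ofReal_real_eq_id, Unitary.conjStarAlgAut_star_apply, hQ_def, hlam_def] using this
  -- abbreviations for columns
  set u : Fin n → Fin m → ℝ := fun j => (A * Q)ᵀ j with hu_def
  set v : Fin n → Fin m → ℝ := fun j => (B * Q)ᵀ j with hv_def
  have hgram_u : (A * Q)ᴴ * (A * Q) = Matrix.diagonal lam := by
    rw [Matrix.conjTranspose_mul, Matrix.mul_assoc, ← Matrix.mul_assoc Aᴴ, ← Matrix.mul_assoc,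
      hspec]
  have huu : ∀ i j, u i ⬝ᵥ u j = Matrix.diagonal lam i j := by
    intro i j
    rw [← hgram_u, cross_entry]
  -- PSD of 1 - Gram(BQ)
  have hGpsd : ((1 : Matrix (Fin n) (Fin n) ℝ) - (B * Q)ᴴ * (B * Q)).PosSemidef := by
    have h1 : (1 : Matrix (Fin n) (Fin n) ℝ) - (B * Q)ᴴ * (B * Q) =
        Qᴴ * ((1 : Matrix (Fin n) (Fin n) ℝ) - Bᴴ * B) * Q := by
      rw [Matrix.mul_sub, Matrix.sub_mul, Matrix.mul_one, hQ1]
      congr 1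
      rw [Matrix.conjTranspose_mul, Matrix.mul_assoc, ← Matrix.mul_assoc Bᴴ, ← Matrix.mul_assoc]
    rw [h1]
    exact (one_sub_posSemidef B hB).conjTranspose_mul_mul_same Q
  have hGentry : ∀ i j, ((1 : Matrix (Fin n) (Fin n) ℝ) - (B * Q)ᴴ * (B * Q)) i j
      = (1 : Matrix (Fin n) (Fin n) ℝ) i j - v i ⬝ᵥ v j := by
    intro i j
    rw [Matrix.sub_apply, cross_entry]
  -- diagonal entries: ‖v i‖² ≤ 1
  have hv1 : ∀ i, v i ⬝ᵥ v i ≤ 1 := by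
    intro i
    have h := hGpsd.dotProduct_mulVec_nonneg (Pi.single i 1)
    have : ((1 : Matrix (Fin n) (Fin n) ℝ) - (B * Q)ᴴ * (B * Q)) i i ≥ 0 := by
      simpa [Matrix.mulVec_single, dotProduct, Pi.single_apply, Finset.sum_ite_eq'] using h
    rw [hGentry i i, Matrix.one_apply_eq] at this
    linarith
  -- trace identities
  have htrAB : Matrix.trace (Aᴴ * B) = ∑ i, u i ⬝ᵥ v i := by
    have h1 : Q * ((A * Q)ᴴ * (B * Q)) * Qᴴ = Aᴴ * B := by
      rw [Matrix.conjTranspose_mul]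
      rw [show Q * (Qᴴ * Aᴴ * (B * Q)) * Qᴴ = (Q * Qᴴ) * (Aᴴ * B) * (Q * Qᴴ) by
        simp only [Matrix.mul_assoc]]
      rw [hQ2]
      simp
    rw [← h1, Matrix.trace_mul_cycle, hQ1, Matrix.one_mul, Matrix.trace]
    exact Finset.sum_congr rfl fun i _ => by rw [Matrix.diag_apply, cross_entry]
  have habs : matAbs A = Q * Matrix.diagonal (fun i => Real.sqrt (lam i)) * Qᴴ := by
    rw [matAbs, matPow, dif_pos hHerm, ← Matrix.star_eq_conjTranspose]
    congr 2
    funext i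
    simp [Real.sqrt_eq_rpow, hlam_def]
  have htrabs : Matrix.trace (matAbs A) = ∑ i, Real.sqrt (lam i) := by
    rw [habs, Matrix.trace_mul_cycle, hQ1, Matrix.one_mul, Matrix.trace_diagonal]
  -- termwise Cauchy-Schwarz
  have hterm : ∀ i, u i ⬝ᵥ v i ≤ Real.sqrt (lam i) := by
    intro i
    have hcs : (u i ⬝ᵥ v i) ^ 2 ≤ lam i * 1 := by
      have h := Finset.sum_mul_sq_le_sq_mul_sq Finset.univ (u i) (v i)
      have h1 : (u i ⬝ᵥ v i) ^ 2 ≤ (u i ⬝ᵥ u i) * (v i ⬝ᵥ v i) := by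
        simpa [dotProduct, sq] using h
      calc (u i ⬝ᵥ v i) ^ 2 ≤ (u i ⬝ᵥ u i) * (v i ⬝ᵥ v i) := h1
        _ ≤ lam i * 1 := by
            rw [huu i i, Matrix.diagonal_apply_eq]
            exact mul_le_mul_of_nonneg_left (hv1 i) (hlam_nonneg i)
    rw [mul_one] at hcs
    calc u i ⬝ᵥ v i ≤ |u i ⬝ᵥ v i| := le_abs_self _
      _ = Real.sqrt ((u i ⬝ᵥ v i) ^ 2) := (Real.sqrt_sq_eq_abs _).symm
      _ ≤ Real.sqrt (lam i) := Real.sqrt_le_sqrt hcs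
  -- equality in each term
  have heach : ∀ i, u i ⬝ᵥ v i = Real.sqrt (lam i) := by
    have hsum : ∑ i, u i ⬝ᵥ v i = ∑ i, Real.sqrt (lam i) := by
      rw [← htrAB, ← htrabs, htr]
    have := (Finset.sum_eq_sum_iff_of_le (fun i _ => hterm i)).mp hsum
    exact fun i => this i (Finset.mem_univ i)
  -- structure for positive eigenvalues
  have hpos : ∀ i, lam i ≠ 0 →
      u i = Real.sqrt (lam i) • v i ∧ v i ⬝ᵥ v i = 1 := by
    intro i hli
    set c := Real.sqrt (lam i) with hc_def
    have hc2 : c ^ 2 = lam i := Real.sq_sqrt (hlam_nonneg i)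
    have hcpos : 0 < c := Real.sqrt_pos.mpr (lt_of_le_of_ne (hlam_nonneg i) (Ne.symm hli))
    have huui : u i ⬝ᵥ u i = lam i := by rw [huu i i, Matrix.diagonal_apply_eq]
    have huvi : u i ⬝ᵥ v i = c := heach i
    have hvui : v i ⬝ᵥ u i = c := by rw [dotProduct_comm]; exact huvi
    have hw : (u i - c • v i) ⬝ᵥ (u i - c • v i) = c ^ 2 * (v i ⬝ᵥ v i - 1) := by
      simp only [sub_dotProduct, dotProduct_sub, smul_dotProduct, dotProduct_smul,
        smul_eq_mul, huui, huvi, hvui]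
      nlinarith [hc2]
    have hwz : (u i - c • v i) ⬝ᵥ (u i - c • v i) = 0 := by
      have h1 : c ^ 2 * (v i ⬝ᵥ v i - 1) ≤ 0 := by nlinarith [hv1 i, sq_nonneg c]
      have h2 := dp_self_nonneg (u i - c • v i)
      linarith [hw ▸ h1, h2]
    have hwzero : u i - c • v i = 0 := dotProduct_self_eq_zero.mp hwz
    constructor
    · exact sub_eq_zero.mp hwzero
    · have : c ^ 2 * (v i ⬝ᵥ v i - 1) = 0 := by rw [← hw, hwz]
      have hc2ne : c ^ 2 ≠ 0 := by positivity
      have := mul_eq_zero.mp this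
      rcases this with h | h
      · exact absurd h hc2ne
      · linarith [h]
  -- orthogonality of v i with other columns when lam i ≠ 0
  have horth : ∀ i j, lam i ≠ 0 → i ≠ j → v i ⬝ᵥ v j = 0 := by
    intro i j hli hij
    obtain ⟨L, hL⟩ := CStarAlgebra.nonneg_iff_eq_star_mul_self.mp hGpsd.nonneg
    rw [Matrix.star_eq_conjTranspose] at hL
    have hdiag : (Lᴴ * L) i i = 0 := by
      rw [← hL, hGentry i i, Matrix.one_apply_eq, (hpos i hli).2, sub_self]
    have hLi : Lᵀ i = 0 := by
      rw [cross_entry] at hdiag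
      exact dotProduct_self_eq_zero.mp hdiag
    have hentry : (Lᴴ * L) i j = 0 := by
      rw [cross_entry, hLi, zero_dotProduct]
    rw [← hL, hGentry i j, Matrix.one_apply_ne hij] at hentry
    linarith
  -- zero columns for zero eigenvalues
  have hzero : ∀ i, lam i = 0 → u i = 0 := by
    intro i hli
    have : u i ⬝ᵥ u i = 0 := by rw [huu i i, Matrix.diagonal_apply_eq, hli]
    exact dotProduct_self_eq_zero.mp this
  -- the key diagonal identity
  have hdiagid : (A * Q)ᴴ * (B * Q) = Matrix.diagonal (fun i => Real.sqrt (lam i)) := by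
    ext i j
    rw [cross_entry]
    by_cases hli : lam i = 0
    · rw [show (A * Q)ᵀ i = u i from rfl, hzero i hli, zero_dotProduct]
      rcases eq_or_ne i j with rfl | hij
      · rw [Matrix.diagonal_apply_eq, hli, Real.sqrt_zero]
      · rw [Matrix.diagonal_apply_ne _ hij]
    · obtain ⟨hui, hvi⟩ := hpos i hli
      rw [show (A * Q)ᵀ i = u i from rfl, show (B * Q)ᵀ j = v j from rfl, hui,
        smul_dotProduct]
      rcases eq_or_ne i j with rfl | hij
      · rw [Matrix.diagonal_apply_eq, hvi, smul_eq_mul, mul_one]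
      · rw [Matrix.diagonal_apply_ne _ hij, horth i j hli hij, smul_eq_mul, mul_zero]
  -- conclude A* B = matAbs A
  have hmain : Aᴴ * B = matAbs A := by
    have h1 : Q * ((A * Q)ᴴ * (B * Q)) * Qᴴ = Aᴴ * B := by
      rw [Matrix.conjTranspose_mul]
      rw [show Q * (Qᴴ * Aᴴ * (B * Q)) * Qᴴ = (Q * Qᴴ) * (Aᴴ * B) * (Q * Qᴴ) by
        simp only [Matrix.mul_assoc]]
      rw [hQ2]
      simp
    rw [← h1, hdiagid, habs]
  refine ⟨hmain, fun hA0 => ?_⟩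
  -- norm part
  have hHne : Aᴴ * A ≠ 0 := fun h => hA0 (conjTranspose_mul_self_eq_zero.mp h)
  have hex : ∃ i, lam i ≠ 0 := by
    by_contra h
    push_neg at h
    apply hHne
    have hdd : Matrix.diagonal lam = 0 := by
      ext i j
      rcases eq_or_ne i j with rfl | hij
      · rw [Matrix.diagonal_apply_eq, h i]; rfl
      · rw [Matrix.diagonal_apply_ne _ hij]; rfl
    have := hHerm.spectral_theorem
    rw [show Matrix.diagonal (RCLike.ofReal ∘ hHerm.eigenvalues) = Matrix.diagonal lam by
      simp [RCLike.ofReal_real_eq_id, hlam_def], hdd] at this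
    simpa using this
  obtain ⟨i, hli⟩ := hex
  have hvi : v i ⬝ᵥ v i = 1 := (hpos i hli).2
  have hxi : (Qᵀ i) ⬝ᵥ (Qᵀ i) = 1 := by
    have : (Qᴴ * Q) i i = Qᵀ i ⬝ᵥ Qᵀ i := cross_entry Q Q i i
    rw [hQ1, Matrix.one_apply_eq] at this
    exact this.symm
  have hBx : (B *ᵥ (Qᵀ i)) ⬝ᵥ (B *ᵥ (Qᵀ i)) = 1 := by
    have hveq : v i = B *ᵥ (Qᵀ i) := by
      funext k
      simp [hv_def, Matrix.transpose_apply, Matrix.mul_apply, Matrix.mulVec, dotProduct,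
        mul_comm]
    rw [← hveq]
    exact hvi
  exact le_antisymm hB (matOpNorm_ge B (Qᵀ i) hxi hBx)


/-- **Equality case in matrix Hölder's inequality for p = 1, q = ∞**
(Theorem 2.9): for real m×n matrices A, B with ‖B‖ ≤ 1, one has
tr(A^*B) = tr(|A|) iff A^*B is symmetric positive semidefinite and
A^*BB^*A = A^*A; moreover if A ≠ 0 and equality holds, then ‖B‖ = 1. -/
theorem trace_eq_trace_abs_iff {m n : ℕ} (A B : Matrix (Fin m) (Fin n) ℝ)
    (hB : matOpNorm B ≤ 1) :
    (Matrix.trace (Aᴴ * B) = Matrix.trace (matAbs A) ↔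
      (Aᴴ * B).PosSemidef ∧ Aᴴ * B * Bᴴ * A = Aᴴ * A) ∧
    (A ≠ 0 → Matrix.trace (Aᴴ * B) = Matrix.trace (matAbs A) → matOpNorm B = 1) := by
  have hH := posSemidef_conjTranspose_mul_self A
  have habs_psd : (matAbs A).PosSemidef := by
    rw [matAbs_eq_sqrt]
    exact (CFC.sqrt_nonneg _).posSemidef
  have habs_sq : matAbs A * matAbs A = Aᴴ * A := by
    rw [matAbs_eq_sqrt]
    exact CFC.sqrt_mul_sqrt_self _ hH.nonneg
  constructor
  · constructor
    · intro htr
      obtain ⟨hmain, -⟩ := key A B hB htr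
      refine ⟨hmain ▸ habs_psd, ?_⟩
      have h1 : Aᴴ * B * Bᴴ * A = (Aᴴ * B) * (Aᴴ * B)ᴴ := by
        rw [Matrix.conjTranspose_mul, Matrix.conjTranspose_conjTranspose, Matrix.mul_assoc]
      rw [h1, hmain, habs_psd.1.eq, habs_sq]
    · rintro ⟨hpsd, heqn⟩
      have hsq : (Aᴴ * B) ^ 2 = Aᴴ * A := by
        have h2 : (Aᴴ * B)ᴴ = Bᴴ * A := by
          rw [Matrix.conjTranspose_mul, Matrix.conjTranspose_conjTranspose]
        calc (Aᴴ * B) ^ 2 = (Aᴴ * B) * (Aᴴ * B) := pow_two _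
          _ = (Aᴴ * B) * (Aᴴ * B)ᴴ := by rw [hpsd.1.eq]
          _ = Aᴴ * B * Bᴴ * A := by rw [h2]; simp only [Matrix.mul_assoc]
          _ = Aᴴ * A := heqn
      have heq := (CFC.sqrt_unique (a := Aᴴ * A) (by rw [← sq]; exact hsq) hpsd.nonneg).symm
      rw [heq, ← matAbs_eq_sqrt]
  · intro hA0 htr
    exact (key A B hB htr).2 hA0
end
end

section
/- Let μ be an ℝ^m-valued Borel measure on ℝ^n of finite total variation with μ(ℝ^n) = 0 and finite first moments, and let M be an ℝ^{m×n}-valued Borel measure on ℝ^n of finite total variation such that −div M = μ, i.e. ∫⟨f, dμ⟩ = ∫⟨Df, dM⟩ for all f ∈ C¹₀(ℝ^n, ℝ^m). Then ∫⟨f, dμ⟩ = ∫⟨Df, dM⟩ holds for all f ∈ C¹(ℝ^n, ℝ^m) with bounded derivative. -/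
open Matrix MeasureTheory Filter
open scoped RealInnerProductSpace Topology

noncomputable section

/-- Euclidean space ℝⁿ. -/
abbrev Euc (n : ℕ) := EuclideanSpace ℝ (Fin n)

/-- Frobenius (trace) pairing ⟨A, B⟩ = tr(AB^*) of two m×n matrices. -/
def frob {m n : ℕ} (A B : Matrix (Fin m) (Fin n) ℝ) : ℝ := Matrix.trace (A * Bᴴ)

/-- The matrix of the Fréchet derivative of f : ℝⁿ → ℝᵐ at x. -/
def fderivMat {n m : ℕ} (f : Euc n → Euc m) (x : Euc n) : Matrix (Fin m) (Fin n) ℝ :=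
  Matrix.of fun i j => fderiv ℝ f x (EuclideanSpace.single j 1) i

/-- f ∈ C¹(ℝⁿ, ℝᵐ): continuously differentiable with bounded derivative. -/
def C1b {n m : ℕ} (f : Euc n → Euc m) : Prop :=
  ContDiff ℝ 1 f ∧ ∃ C : ℝ, ∀ x, ‖fderiv ℝ f x‖ ≤ C

/-- f ∈ C¹₀(ℝⁿ, ℝᵐ): continuously differentiable with derivative vanishing at
infinity. -/
def C1z {n m : ℕ} (f : Euc n → Euc m) : Prop :=
  ContDiff ℝ 1 f ∧ Tendsto (fun x => ‖fderiv ℝ f x‖) (cocompact (Euc n)) (nhds 0)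

/-- The C¹ seminorm ‖f‖_{C¹} = sup_x ‖Df(x)‖ (operator norm). -/
def C1Norm {n m : ℕ} (f : Euc n → Euc m) : ℝ := ⨆ x, ‖fderiv ℝ f x‖

/-- An ℝᵐ-valued Borel measure μ on ℝⁿ of finite total variation, encoded by its
total variation measure `var = ‖μ‖` together with its polar (Radon–Nikodym)
density `density = dμ/d‖μ‖`, a vector field of norm one ‖μ‖-a.e.; thus
μ(E) = ∫_E density d‖μ‖. -/
structure VecMeas (n m : ℕ) where
  var : Measure (Euc n)
  density : Euc n → Euc m
  finite : IsFiniteMeasure var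
  measurable_density : Measurable density
  norm_density : ∀ᵐ x ∂var, ‖density x‖ = 1

/-- The pairing ∫ ⟨f, dμ⟩. -/
def VecMeas.pair {n m : ℕ} (μ : VecMeas n m) (f : Euc n → Euc m) : ℝ :=
  ∫ x, ⟪f x, μ.density x⟫ ∂μ.var

/-- μ(ℝⁿ) = 0. -/
def VecMeas.totalZero {n m : ℕ} (μ : VecMeas n m) : Prop :=
  ∫ x, μ.density x ∂μ.var = 0

/-- Finite first moments: ∫ ‖x‖ d‖μ‖(x) < ∞. -/
def VecMeas.finiteFirstMoment {n m : ℕ} (μ : VecMeas n m) : Prop :=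
  Integrable (fun x => ‖x‖) μ.var

/-- An ℝ^{m×n}-valued Borel measure M on ℝⁿ of finite total variation with
respect to the Schatten 1-norm, encoded by its total variation measure
`var = ‖M‖₁` together with its Radon–Nikodym density `density = dM/d‖M‖₁`,
a matrix field of Schatten 1-norm one ‖M‖₁-a.e. -/
structure MatMeas (n m : ℕ) where
  var : Measure (Euc n)
  density : Euc n → Matrix (Fin m) (Fin n) ℝ
  finite : IsFiniteMeasure var
  measurable_density : ∀ i j, Measurable fun x => density x i j
  norm_density : ∀ᵐ x ∂var, Matrix.trace (matAbs (density x)) = 1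

/-- The total variation norm ‖M‖_𝓜 = ‖M‖₁(ℝⁿ). -/
def MatMeas.tvNorm {n m : ℕ} (M : MatMeas n m) : ℝ := (M.var Set.univ).toReal

/-- The pairing ∫ ⟨G, dM⟩ of a matrix field G against M. -/
def MatMeas.pair {n m : ℕ} (M : MatMeas n m) (G : Euc n → Matrix (Fin m) (Fin n) ℝ) : ℝ :=
  ∫ x, frob (G x) (M.density x) ∂M.var

/-- −div M = μ: for all f ∈ C¹₀(ℝⁿ, ℝᵐ), ∫⟨f, dμ⟩ = ∫⟨Df, dM⟩. -/
def IsNegDiv {n m : ℕ} (M : MatMeas n m) (μ : VecMeas n m) : Prop :=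
  ∀ f : Euc n → Euc m, C1z f → μ.pair f = M.pair (fderivMat f)

/-- J(μ) = sup { ∫⟨u, dμ⟩ : u ∈ C¹(ℝⁿ,ℝᵐ), ‖u‖_{C¹} ≤ 1 }. -/
def Jsup {n m : ℕ} (μ : VecMeas n m) : ℝ :=
  sSup {r | ∃ f : Euc n → Euc m, C1b f ∧ C1Norm f ≤ 1 ∧ r = μ.pair f}

/-- I(μ) = inf { ‖M‖_𝓜 : −div M = μ }. -/
def Iinf {n m : ℕ} (μ : VecMeas n m) : ℝ :=
  sInf {r | ∃ M : MatMeas n m, IsNegDiv M μ ∧ r = M.tvNorm}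


section Aux

lemma trace_matPow_half {n : ℕ} (A : Matrix (Fin n) (Fin n) ℝ) (hA : A.IsHermitian) :
    (matPow A (1/2)).trace = ∑ i, (hA.eigenvalues i) ^ ((1:ℝ)/2) := by
  rw [matPow, dif_pos hA, Matrix.trace_mul_cycle]
  have h1 : (star hA.eigenvectorUnitary : Matrix.unitaryGroup (Fin n) ℝ).1 *
      (hA.eigenvectorUnitary : Matrix (Fin n) (Fin n) ℝ) = 1 := by
    simpa using (unitary.coe_star_mul_self hA.eigenvectorUnitary)
  rw [h1, one_mul, Matrix.trace_diagonal]

lemma abs_entry_le_trace_matAbs {m n : ℕ} (B : Matrix (Fin m) (Fin n) ℝ) (i : Fin m) (j : Fin n) :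
    |B i j| ≤ (matAbs B).trace := by
  classical
  have hH : (Bᴴ * B).IsHermitian := Matrix.isHermitian_conjTranspose_mul_self B
  have hnn : ∀ k, 0 ≤ hH.eigenvalues k := fun k =>
    (Matrix.posSemidef_conjTranspose_mul_self B).eigenvalues_nonneg k
  have htr : (matAbs B).trace = ∑ k, Real.sqrt (hH.eigenvalues k) := by
    rw [matAbs, trace_matPow_half _ hH]
    exact Finset.sum_congr rfl fun k _ => (Real.sqrt_eq_rpow _).symm
  have hsum : ∑ k, hH.eigenvalues k = (Bᴴ * B).trace := by
    have hst := hH.spectral_theorem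
    have h1 : star (hH.eigenvectorUnitary : Matrix (Fin n) (Fin n) ℝ) *
        (hH.eigenvectorUnitary : Matrix (Fin n) (Fin n) ℝ) = 1 := by
      simpa [Unitary.coe_star] using (Unitary.coe_star_mul_self hH.eigenvectorUnitary)
    calc ∑ k, hH.eigenvalues k
        = (Matrix.diagonal (RCLike.ofReal ∘ hH.eigenvalues)).trace := by
          simp [Matrix.trace_diagonal]
      _ = (Bᴴ * B).trace := by
          conv_rhs => rw [hst]
          rw [Unitary.conjStarAlgAut_apply, Matrix.trace_mul_cycle, h1, one_mul]
  have htrBB : (Bᴴ * B).trace = ∑ q : Fin n, ∑ p : Fin m, (B p q)^2 := by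
    simp [Matrix.trace, Matrix.diag, Matrix.mul_apply, Matrix.conjTranspose_apply, sq]
  have hentry : (B i j)^2 ≤ ∑ q : Fin n, ∑ p : Fin m, (B p q)^2 := by
    have h1 : (B i j)^2 ≤ ∑ p : Fin m, (B p j)^2 :=
      Finset.single_le_sum (f := fun p => (B p j)^2) (fun p _ => sq_nonneg _) (Finset.mem_univ i)
    refine h1.trans ?_
    exact Finset.single_le_sum (f := fun q => ∑ p : Fin m, (B p q)^2)
      (fun q _ => Finset.sum_nonneg fun p _ => sq_nonneg _) (Finset.mem_univ j)
  have hfin : (B i j)^2 ≤ (∑ k, Real.sqrt (hH.eigenvalues k))^2 := by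
    calc (B i j)^2 ≤ ∑ q : Fin n, ∑ p : Fin m, (B p q)^2 := hentry
      _ = ∑ k, hH.eigenvalues k := by rw [hsum, htrBB]
      _ = ∑ k, (Real.sqrt (hH.eigenvalues k))^2 := by
          exact Finset.sum_congr rfl fun k _ => (Real.sq_sqrt (hnn k)).symm
      _ ≤ (∑ k, Real.sqrt (hH.eigenvalues k))^2 :=
          Finset.sum_sq_le_sq_sum_of_nonneg fun k _ => Real.sqrt_nonneg _
  rw [htr]
  calc |B i j| = Real.sqrt ((B i j)^2) := (Real.sqrt_sq_eq_abs _).symm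
    _ ≤ Real.sqrt ((∑ k, Real.sqrt (hH.eigenvalues k))^2) := Real.sqrt_le_sqrt hfin
    _ = ∑ k, Real.sqrt (hH.eigenvalues k) := Real.sqrt_sq
        (Finset.sum_nonneg fun k _ => Real.sqrt_nonneg _)

lemma frob_eq_sum {m n : ℕ} (A B : Matrix (Fin m) (Fin n) ℝ) :
    frob A B = ∑ i, ∑ j, A i j * B i j := by
  simp [frob, Matrix.trace, Matrix.diag, Matrix.mul_apply, Matrix.conjTranspose_apply]

lemma abs_frob_le {m n : ℕ} (A B : Matrix (Fin m) (Fin n) ℝ) {K : ℝ}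
    (hA : ∀ i j, |A i j| ≤ K) (hB : (matAbs B).trace = 1) :
    |frob A B| ≤ (m : ℝ) * n * K := by
  rw [frob_eq_sum]
  calc |∑ i, ∑ j, A i j * B i j| ≤ ∑ i, |∑ j, A i j * B i j| := Finset.abs_sum_le_sum_abs _ _
    _ ≤ ∑ _i : Fin m, ∑ _j : Fin n, K := by
        apply Finset.sum_le_sum
        intro i _
        refine (Finset.abs_sum_le_sum_abs _ _).trans ?_
        apply Finset.sum_le_sum
        intro j _
        rw [abs_mul]
        calc |A i j| * |B i j| ≤ K * 1 := by
              apply mul_le_mul (hA i j) ?_ (abs_nonneg _) ?_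
              · rw [← hB]; exact abs_entry_le_trace_matAbs B i j
              · exact le_trans (abs_nonneg _) (hA i j)
          _ = K := mul_one K
    _ = (m : ℝ) * n * K := by simp [Finset.sum_const, mul_assoc]

lemma coord_abs_le_norm {m : ℕ} (v : Euc m) (i : Fin m) : |v i| ≤ ‖v‖ := by
  rw [EuclideanSpace.norm_eq, ← Real.sqrt_sq_eq_abs]
  apply Real.sqrt_le_sqrt
  have h := Finset.single_le_sum (f := fun j => ‖v j‖ ^ 2)
    (fun j _ => sq_nonneg _) (Finset.mem_univ i)
  simpa [sq_abs] using h

lemma fderivMat_entry_abs_le {n m : ℕ} (f : Euc n → Euc m) (x : Euc n) (i : Fin m) (j : Fin n) :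
    |fderivMat f x i j| ≤ ‖fderiv ℝ f x‖ := by
  refine (coord_abs_le_norm (fderiv ℝ f x (EuclideanSpace.single j 1)) i).trans ?_
  calc ‖fderiv ℝ f x (EuclideanSpace.single j 1)‖
      ≤ ‖fderiv ℝ f x‖ * ‖EuclideanSpace.single j (1:ℝ)‖ := (fderiv ℝ f x).le_opNorm _
    _ = ‖fderiv ℝ f x‖ := by rw [EuclideanSpace.norm_single, norm_one, mul_one]

end Aux

set_option maxHeartbeats 1000000 in
/-- **Lemma 3.2**: if μ ∈ 𝓜(ℝⁿ, ℝᵐ) has μ(ℝⁿ) = 0 and finite first moments and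
M ∈ 𝓜(ℝⁿ, ℝ^{m×n}) satisfies −div M = μ (tested against C¹₀ maps), then
∫⟨f, dμ⟩ = ∫⟨Df, dM⟩ for every f ∈ C¹(ℝⁿ, ℝᵐ) with bounded derivative. -/
theorem negDiv_pairing_extends_to_C1b {n m : ℕ} (μ : VecMeas n m)
    (hzero : μ.totalZero) (hmom : μ.finiteFirstMoment)
    (M : MatMeas n m) (hdiv : IsNegDiv M μ) :
    ∀ f : Euc n → Euc m, C1b f → μ.pair f = M.pair (fderivMat f) := by
  intro f hf
  haveI := μ.finite
  haveI := M.finite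
  obtain ⟨hf1, C, hC⟩ := hf
  set g : Euc n → Euc m := fun x => f x - f 0 with hgdef
  have hg1 : ContDiff ℝ 1 g := hf1.sub contDiff_const
  have hgdiff : Differentiable ℝ g := hg1.differentiable one_ne_zero
  have hgd : ∀ x, fderiv ℝ g x = fderiv ℝ f x := fun x => fderiv_sub_const (f 0)
  have hgC : ∀ x, ‖fderiv ℝ g x‖ ≤ C := fun x => le_of_eq_of_le (congrArg _ (hgd x)) (hC x)
  have hC0 : 0 ≤ C := le_trans (norm_nonneg _) (hC 0)
  have hglip : ∀ x, ‖g x‖ ≤ C * ‖x‖ := by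
    intro x
    have h := convex_univ.norm_image_sub_le_of_norm_fderiv_le
      (f := g) (fun y _ => hgdiff y) (fun y _ => hgC y) (Set.mem_univ (0:Euc n)) (Set.mem_univ x)
    simpa [hgdef] using h
  -- the bump function and its scalings
  set θ : ContDiffBump (0 : Euc n) := ⟨1, 2, one_pos, one_lt_two⟩ with hθdef
  have hθ1 : ContDiff ℝ 1 (⇑θ) := θ.contDiff
  obtain ⟨C₀, hC₀⟩ := (θ.hasCompactSupport.fderiv (𝕜 := ℝ)).exists_bound_of_continuous
    (hθ1.continuous_fderiv one_ne_zero)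
  have hC₀0 : 0 ≤ C₀ := le_trans (norm_nonneg _) (hC₀ 0)
  set s : ℕ → ℝ := fun k => (k : ℝ) + 1 with hsdef
  have hs1 : ∀ k, 1 ≤ s k := fun k => by
    simp only [hsdef]; exact le_add_of_nonneg_left (Nat.cast_nonneg k)
  have hs0 : ∀ k, 0 < s k := fun k => lt_of_lt_of_le one_pos (hs1 k)
  set L : ℕ → (Euc n →L[ℝ] Euc n) :=
    fun k => (s k)⁻¹ • ContinuousLinearMap.id ℝ (Euc n) with hLdef
  have hLapp : ∀ k x, L k x = (s k)⁻¹ • x := fun k x => rfl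
  have hLnorm : ∀ k, ‖L k‖ ≤ (s k)⁻¹ := by
    intro k
    simp only [hLdef]
    calc ‖(s k)⁻¹ • ContinuousLinearMap.id ℝ (Euc n)‖ ≤ ‖(s k)⁻¹‖ * ‖ContinuousLinearMap.id ℝ (Euc n)‖ := ContinuousLinearMap.opNorm_smul_le _ _
      _ ≤ ‖(s k)⁻¹‖ * 1 := by
          apply mul_le_mul_of_nonneg_left ContinuousLinearMap.norm_id_le (norm_nonneg _)
      _ = (s k)⁻¹ := by
          rw [mul_one, Real.norm_eq_abs, abs_of_pos (inv_pos.2 (hs0 k))]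
  set φ : ℕ → Euc n → ℝ := fun k x => θ (L k x) with hφdef
  have hφc : ∀ k, ContDiff ℝ 1 (φ k) := fun k => hθ1.comp (L k).contDiff
  have hφdiff : ∀ k x, DifferentiableAt ℝ (φ k) x := fun k x => ((hφc k).differentiable one_ne_zero) x
  have hrIn : θ.rIn = 1 := rfl
  have hrOut : θ.rOut = 2 := rfl
  have hφ1 : ∀ k x, ‖x‖ ≤ s k → φ k x = 1 := by
    intro k x hx
    apply θ.one_of_mem_closedBall
    rw [Metric.mem_closedBall, dist_zero_right, hrIn, hLapp, norm_smul, Real.norm_eq_abs,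
      abs_of_pos (inv_pos.2 (hs0 k))]
    calc (s k)⁻¹ * ‖x‖ ≤ (s k)⁻¹ * s k :=
          mul_le_mul_of_nonneg_left hx (le_of_lt (inv_pos.2 (hs0 k)))
      _ = 1 := inv_mul_cancel₀ (hs0 k).ne'
  have hφ0 : ∀ k x, 2 * s k ≤ ‖x‖ → φ k x = 0 := by
    intro k x hx
    apply θ.zero_of_le_dist
    rw [hrOut, dist_zero_right, hLapp, norm_smul, Real.norm_eq_abs,
      abs_of_pos (inv_pos.2 (hs0 k))]
    calc (2:ℝ) = (s k)⁻¹ * (2 * s k) := by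
          rw [mul_comm 2 (s k), ← mul_assoc, inv_mul_cancel₀ (hs0 k).ne', one_mul]
      _ ≤ (s k)⁻¹ * ‖x‖ := mul_le_mul_of_nonneg_left hx (le_of_lt (inv_pos.2 (hs0 k)))
  have hφfd : ∀ k x, fderiv ℝ (φ k) x = (fderiv ℝ (⇑θ) (L k x)).comp (L k) := by
    intro k x
    simp only [hφdef]
    exact (((hθ1.differentiable one_ne_zero (L k x)).hasFDerivAt).comp x
      ((L k).hasFDerivAt)).fderiv
  have hφgrad : ∀ k x, ‖fderiv ℝ (φ k) x‖ ≤ C₀ * (s k)⁻¹ := by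
    intro k x
    rw [hφfd]
    calc ‖(fderiv ℝ (⇑θ) (L k x)).comp (L k)‖ ≤ ‖fderiv ℝ (⇑θ) (L k x)‖ * ‖L k‖ :=
          ContinuousLinearMap.opNorm_comp_le _ _
      _ ≤ C₀ * (s k)⁻¹ := mul_le_mul (hC₀ _) (hLnorm k) (norm_nonneg _) hC₀0
  have hφfd0 : ∀ k x, 2 * s k < ‖x‖ → fderiv ℝ (φ k) x = 0 := by
    intro k x hx
    have hopen : IsOpen {y : Euc n | 2 * s k < ‖y‖} := isOpen_lt continuous_const continuous_norm
    have hev : φ k =ᶠ[𝓝 x] (fun _ => (0:ℝ)) := by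
      filter_upwards [hopen.mem_nhds hx] with y hy
      exact hφ0 k y (le_of_lt hy)
    rw [hev.fderiv_eq]
    exact fderiv_const_apply 0
  -- the cut-off approximations
  set F : ℕ → Euc n → Euc m := fun k x => φ k x • g x with hFdef
  have hFc : ∀ k, ContDiff ℝ 1 (F k) := fun k => (hφc k).smul hg1
  have hφbd : ∀ k x, |φ k x| ≤ 1 := by
    intro k x
    rw [abs_of_nonneg (θ.nonneg' (L k x))]
    exact θ.le_one
  have hFfd : ∀ k x, fderiv ℝ (F k) x
      = φ k x • fderiv ℝ g x + (fderiv ℝ (φ k) x).smulRight (g x) :=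
    fun k x => fderiv_smul (hφdiff k x) (hgdiff x)
  have hKb : ∀ k x, ‖fderiv ℝ (F k) x‖ ≤ C + 2 * C * C₀ := by
    intro k x
    rw [hFfd]
    refine (norm_add_le _ _).trans ?_
    have h1 : ‖φ k x • fderiv ℝ g x‖ ≤ C := by
      calc ‖φ k x • fderiv ℝ g x‖
          ≤ ‖φ k x‖ * ‖fderiv ℝ g x‖ := ContinuousLinearMap.opNorm_smul_le _ _
        _ ≤ 1 * C := by
            rw [Real.norm_eq_abs]
            exact mul_le_mul (hφbd k x) (hgC x) (norm_nonneg _) zero_le_one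
        _ = C := one_mul C
    have h2 : ‖(fderiv ℝ (φ k) x).smulRight (g x)‖ ≤ 2 * C * C₀ := by
      rw [ContinuousLinearMap.norm_smulRight_apply]
      by_cases hx : ‖x‖ ≤ 2 * s k
      · calc ‖fderiv ℝ (φ k) x‖ * ‖g x‖
            ≤ (C₀ * (s k)⁻¹) * (C * (2 * s k)) := by
              apply mul_le_mul (hφgrad k x) ?_ (norm_nonneg _) (by positivity)
              exact (hglip x).trans (mul_le_mul_of_nonneg_left hx hC0)
          _ = 2 * C * C₀ * ((s k)⁻¹ * s k) := by ring
          _ = 2 * C * C₀ := by rw [inv_mul_cancel₀ (hs0 k).ne', mul_one]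
      · rw [hφfd0 k x (not_le.1 hx), norm_zero, zero_mul]
        positivity
    linarith
  have hFz : ∀ k, C1z (F k) := by
    intro k
    refine ⟨hFc k, ?_⟩
    have hev : (fun x => ‖fderiv ℝ (F k) x‖) =ᶠ[cocompact (Euc n)] (fun _ => (0:ℝ)) := by
      have hmem : (Metric.closedBall (0:Euc n) (2 * s k))ᶜ ∈ cocompact (Euc n) :=
        (isCompact_closedBall _ _).compl_mem_cocompact
      filter_upwards [hmem] with x hx
      have hx' : 2 * s k < ‖x‖ := by
        simpa [Metric.mem_closedBall, dist_zero_right] using hx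
      have hopen : IsOpen {y : Euc n | 2 * s k < ‖y‖} := isOpen_lt continuous_const continuous_norm
      have hev2 : F k =ᶠ[𝓝 x] (fun _ => (0:Euc m)) := by
        filter_upwards [hopen.mem_nhds hx'] with y hy
        simp only [hFdef, hφ0 k y hy.le, zero_smul]
      rw [hev2.fderiv_eq, fderiv_const_apply, norm_zero]
    exact tendsto_const_nhds.congr' hev.symm
  have hEq : ∀ k, μ.pair (F k) = M.pair (fderivMat (F k)) := fun k => hdiv (F k) (hFz k)
  have hslarge : ∀ x : Euc n, ∀ᶠ k : ℕ in atTop, ‖x‖ < s k := by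
    intro x
    filter_upwards [Filter.eventually_ge_atTop ⌈‖x‖⌉₊] with k hk
    have h1 : ‖x‖ ≤ (⌈‖x‖⌉₊ : ℝ) := Nat.le_ceil _
    have h2 : ((⌈‖x‖⌉₊ : ℕ) : ℝ) ≤ (k : ℝ) := Nat.cast_le.2 hk
    simp only [hsdef]
    linarith
  -- limit of the left-hand side
  have hA : Tendsto (fun k => μ.pair (F k)) atTop (𝓝 (μ.pair g)) := by
    simp only [VecMeas.pair]
    apply tendsto_integral_of_dominated_convergence (bound := fun x => C * ‖x‖)
    · intro k
      exact ((((hFc k).continuous).measurable).inner μ.measurable_density).aestronglyMeasurable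
    · exact hmom.const_mul C
    · intro k
      filter_upwards [μ.norm_density] with x hx
      rw [Real.norm_eq_abs]
      calc |⟪F k x, μ.density x⟫| ≤ ‖F k x‖ * ‖μ.density x‖ := abs_real_inner_le_norm _ _
        _ = ‖F k x‖ := by rw [hx, mul_one]
        _ ≤ C * ‖x‖ := by
            simp only [hFdef, norm_smul, Real.norm_eq_abs]
            calc |φ k x| * ‖g x‖ ≤ 1 * (C * ‖x‖) :=
                  mul_le_mul (hφbd k x) (hglip x) (norm_nonneg _) zero_le_one
              _ = C * ‖x‖ := one_mul _
    · apply Filter.Eventually.of_forall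
      intro x
      have hev : (fun k => ⟪F k x, μ.density x⟫) =ᶠ[atTop] (fun _ => ⟪g x, μ.density x⟫) := by
        filter_upwards [hslarge x] with k hk
        simp only [hFdef, hφ1 k x hk.le, one_smul]
      exact Tendsto.congr' hev.symm tendsto_const_nhds
  -- limit of the right-hand side
  have hB : Tendsto (fun k => M.pair (fderivMat (F k))) atTop (𝓝 (M.pair (fderivMat g))) := by
    simp only [MatMeas.pair]
    apply tendsto_integral_of_dominated_convergence
      (bound := fun _ => (m : ℝ) * n * (C + 2 * C * C₀))
    · intro k
      have hcont : Continuous fun x => fderiv ℝ (F k) x := (hFc k).continuous_fderiv one_ne_zero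
      have hmeas : Measurable fun x => frob (fderivMat (F k) x) (M.density x) := by
        simp only [frob_eq_sum]
        apply Finset.measurable_sum
        intro i _
        apply Finset.measurable_sum
        intro j _
        apply Measurable.mul
        · have h1 : Continuous fun x => fderiv ℝ (F k) x (EuclideanSpace.single j 1) :=
            hcont.clm_apply continuous_const
          have h2 : Continuous fun x => fderiv ℝ (F k) x (EuclideanSpace.single j 1) i :=
            (EuclideanSpace.proj i).continuous.comp h1
          exact h2.measurable
        · exact M.measurable_density i j
      exact hmeas.aestronglyMeasurable
    · exact integrable_const _
    · intro k
      filter_upwards [M.norm_density] with x hx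
      rw [Real.norm_eq_abs]
      apply abs_frob_le _ _ ?_ hx
      intro i j
      exact (fderivMat_entry_abs_le (F k) x i j).trans (hKb k x)
    · apply Filter.Eventually.of_forall
      intro x
      have hev : (fun k => frob (fderivMat (F k) x) (M.density x))
          =ᶠ[atTop] (fun _ => frob (fderivMat g x) (M.density x)) := by
        filter_upwards [hslarge x] with k hk
        have hev2 : F k =ᶠ[𝓝 x] g := by
          have hopen : IsOpen {y : Euc n | ‖y‖ < s k} := isOpen_lt continuous_norm continuous_const
          filter_upwards [hopen.mem_nhds hk] with y hy
          simp only [hFdef, hφ1 k y hy.le, one_smul]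
        have hfd : fderiv ℝ (F k) x = fderiv ℝ g x := hev2.fderiv_eq
        simp only [fderivMat, hfd]
      exact Tendsto.congr' hev.symm tendsto_const_nhds
  -- identify the limits
  have hgoal : μ.pair g = M.pair (fderivMat g) := by
    have := hA
    rw [funext hEq] at this
    exact tendsto_nhds_unique this hB
  -- transfer from g back to f
  have hMat : fderivMat g = fderivMat f := by
    funext x
    simp only [fderivMat, hgd x]
  have hdens_int : Integrable μ.density μ.var := by
    refine Integrable.mono' (integrable_const 1) μ.measurable_density.aestronglyMeasurable ?_
    filter_upwards [μ.norm_density] with x hx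
    exact le_of_eq hx
  have hzero' : ∫ x, ⟪f 0, μ.density x⟫ ∂μ.var = 0 := by
    rw [integral_inner hdens_int, hzero, inner_zero_right]
  have hint1 : Integrable (fun x => ⟪g x, μ.density x⟫) μ.var := by
    refine Integrable.mono' (hmom.const_mul C)
      ((hg1.continuous.measurable.inner μ.measurable_density).aestronglyMeasurable) ?_
    filter_upwards [μ.norm_density] with x hx
    rw [Real.norm_eq_abs]
    calc |⟪g x, μ.density x⟫| ≤ ‖g x‖ * ‖μ.density x‖ := abs_real_inner_le_norm _ _
      _ = ‖g x‖ := by rw [hx, mul_one]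
      _ ≤ C * ‖x‖ := hglip x
  have hint2 : Integrable (fun x => ⟪f 0, μ.density x⟫) μ.var := by
    refine Integrable.mono' (integrable_const ‖f 0‖)
      ((measurable_const.inner μ.measurable_density).aestronglyMeasurable) ?_
    filter_upwards [μ.norm_density] with x hx
    rw [Real.norm_eq_abs]
    calc |⟪f 0, μ.density x⟫| ≤ ‖f 0‖ * ‖μ.density x‖ := abs_real_inner_le_norm _ _
      _ = ‖f 0‖ := by rw [hx, mul_one]
  have hpairf : μ.pair f = μ.pair g := by
    simp only [VecMeas.pair]
    have hsplit : ∀ x : Euc n, ⟪f x, μ.density x⟫ = ⟪g x, μ.density x⟫ + ⟪f 0, μ.density x⟫ := by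
      intro x
      rw [← inner_add_left]
      congr 1
      simp [hgdef]
    calc ∫ x, ⟪f x, μ.density x⟫ ∂μ.var
        = ∫ x, (⟪g x, μ.density x⟫ + ⟪f 0, μ.density x⟫) ∂μ.var := by
          exact integral_congr_ae (Filter.Eventually.of_forall hsplit)
      _ = (∫ x, ⟪g x, μ.density x⟫ ∂μ.var) + ∫ x, ⟪f 0, μ.density x⟫ ∂μ.var :=
          integral_add hint1 hint2
      _ = ∫ x, ⟪g x, μ.density x⟫ ∂μ.var := by rw [hzero', add_zero]
  rw [hpairf, hgoal, hMat]
end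
end

section
/- Let μ be an ℝ^n-valued Borel measure on ℝ^n of finite total variation with μ(ℝ^n) = 0 and finite first moments. Then ∫⟨u, dμ⟩ ≥ 0 for every monotone map u ∈ C¹(ℝ^n, ℝ^n) if and only if ∫⟨x, dμ(x)⟩ = J(μ). -/
open Matrix MeasureTheory Filter
open scoped RealInnerProductSpace Topology

noncomputable section

/-- u : ℝⁿ → ℝⁿ is monotone: ⟨u(x) − u(y), x − y⟩ ≥ 0 for all x, y. -/
def IsMonotoneMap {n : ℕ} (u : Euc n → Euc n) : Prop :=
  ∀ x y, 0 ≤ ⟪u x - u y, x - y⟫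

section AuxLemmas

variable {n m : ℕ}

lemma lip_of_bound {f : Euc n → Euc m} {C : ℝ} (hf : ContDiff ℝ 1 f)
    (hC : ∀ x, ‖fderiv ℝ f x‖ ≤ C) (x y : Euc n) : ‖f x - f y‖ ≤ C * ‖x - y‖ :=
  Convex.norm_image_sub_le_of_norm_fderiv_le
    (fun z _ => (hf.differentiable one_ne_zero) z)
    (fun z _ => hC z) convex_univ (Set.mem_univ y) (Set.mem_univ x)

lemma fderiv_bound_of_lip {f : Euc n → Euc m} {L : ℝ} (hL : 0 ≤ L)
    (h : ∀ x y, ‖f x - f y‖ ≤ L * ‖x - y‖) (x : Euc n) : ‖fderiv ℝ f x‖ ≤ L := by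
  have hlip : LipschitzWith L.toNNReal f := by
    apply LipschitzWith.of_dist_le_mul
    intro a b
    rw [Real.coe_toNNReal L hL]
    simpa [dist_eq_norm] using h a b
  have := norm_fderiv_le_of_lipschitz ℝ (x₀ := x) hlip
  rwa [Real.coe_toNNReal L hL] at this

lemma integrable_density (μ : VecMeas n m) : Integrable μ.density μ.var := by
  haveI := μ.finite
  refine Integrable.mono' (integrable_const (1 : ℝ)) μ.measurable_density.aestronglyMeasurable ?_
  filter_upwards [μ.norm_density] with x hx
  rw [hx]

lemma integrable_pair (μ : VecMeas n m) (hmom : μ.finiteFirstMoment)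
    {f : Euc n → Euc m} (hf : C1b f) :
    Integrable (fun x => ⟪f x, μ.density x⟫) μ.var := by
  haveI := μ.finite
  obtain ⟨hc, C, hC⟩ := hf
  refine Integrable.mono' ((integrable_const ‖f 0‖).add (hmom.const_mul C)) ?_ ?_
  · exact (hc.continuous.measurable.inner μ.measurable_density).aestronglyMeasurable
  · filter_upwards [μ.norm_density] with x hx
    have h1 : |⟪f x, μ.density x⟫| ≤ ‖f x‖ * ‖μ.density x‖ := abs_real_inner_le_norm _ _
    rw [hx, mul_one] at h1
    have h3 : ‖f x - f 0‖ ≤ C * ‖x - 0‖ := lip_of_bound hc hC x 0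
    rw [sub_zero] at h3
    have h4 := norm_sub_norm_le (f x) (f 0)
    simp only [Real.norm_eq_abs, Pi.add_apply]
    linarith

lemma pair_sub_smul (μ : VecMeas n m) (hmom : μ.finiteFirstMoment)
    {f g : Euc n → Euc m} (hf : C1b f) (hg : C1b g) (t : ℝ) :
    μ.pair (fun x => f x - t • g x) = μ.pair f - t * μ.pair g := by
  have h1 := integrable_pair μ hmom hf
  have h2 := integrable_pair μ hmom hg
  unfold VecMeas.pair
  simp only [inner_sub_left, real_inner_smul_left]
  rw [integral_sub h1 (h2.const_mul t)]
  congr 1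
  simpa using integral_smul (μ := μ.var) t (fun x => ⟪g x, μ.density x⟫)

lemma pair_smul (μ : VecMeas n m) (hmom : μ.finiteFirstMoment)
    {g : Euc n → Euc m} (hg : C1b g) (c : ℝ) :
    μ.pair (fun x => c • g x) = c * μ.pair g := by
  unfold VecMeas.pair
  simp only [real_inner_smul_left]
  simpa using integral_smul (μ := μ.var) c (fun x => ⟪g x, μ.density x⟫)

lemma pair_le_moment (μ : VecMeas n m) (hzero : μ.totalZero) (hmom : μ.finiteFirstMoment)
    {f : Euc n → Euc m} (hf : C1b f) (hf1 : C1Norm f ≤ 1) :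
    μ.pair f ≤ ∫ x, ‖x‖ ∂μ.var := by
  haveI := μ.finite
  obtain ⟨C, hC⟩ := hf.2
  have hd1 : ∀ x, ‖fderiv ℝ f x‖ ≤ 1 := by
    intro x
    refine le_trans ?_ hf1
    exact le_ciSup ⟨C, by rintro _ ⟨y, rfl⟩; exact hC y⟩ x
  have hconst : Integrable (fun x => ⟪f 0, μ.density x⟫) μ.var :=
    (integrable_density μ).const_inner (f 0)
  have hconst0 : ∫ x, ⟪f 0, μ.density x⟫ ∂μ.var = 0 := by
    rw [integral_inner (integrable_density μ) (f 0), hzero, inner_zero_right]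
  have hsub : Integrable (fun x => ⟪f x - f 0, μ.density x⟫) μ.var := by
    have := (integrable_pair μ hmom hf).sub hconst
    simp only [inner_sub_left]; exact this
  have hkey : μ.pair f = ∫ x, ⟪f x - f 0, μ.density x⟫ ∂μ.var := by
    unfold VecMeas.pair
    rw [← sub_zero (∫ x, ⟪f x, μ.density x⟫ ∂μ.var), ← hconst0,
      ← integral_sub (integrable_pair μ hmom hf) hconst]
    congr 1
    funext x
    rw [← inner_sub_left]
  rw [hkey]
  refine integral_mono_ae hsub hmom ?_
  filter_upwards [μ.norm_density] with x hx
  have h1 : ⟪f x - f 0, μ.density x⟫ ≤ ‖f x - f 0‖ * ‖μ.density x‖ := real_inner_le_norm _ _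
  rw [hx, mul_one] at h1
  have h2 : ‖f x - f 0‖ ≤ 1 * ‖x - 0‖ := lip_of_bound hf.1 hd1 x 0
  rw [sub_zero, one_mul] at h2
  exact h1.trans h2

lemma jset_bddAbove (μ : VecMeas n m) (hzero : μ.totalZero) (hmom : μ.finiteFirstMoment) :
    BddAbove {r | ∃ f : Euc n → Euc m, C1b f ∧ C1Norm f ≤ 1 ∧ r = μ.pair f} := by
  refine ⟨∫ x, ‖x‖ ∂μ.var, ?_⟩
  rintro r ⟨f, hf, hf1, rfl⟩
  exact pair_le_moment μ hzero hmom hf hf1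

lemma C1b_id : C1b (fun x : Euc n => x) := by
  refine ⟨contDiff_id, 1, fun x => ?_⟩
  rw [fderiv_id']
  exact ContinuousLinearMap.norm_id_le

lemma C1Norm_id_le : C1Norm (fun x : Euc n => x) ≤ 1 := by
  refine ciSup_le fun x => ?_
  rw [fderiv_id']
  exact ContinuousLinearMap.norm_id_le

lemma lip_id_sub_smul {u : Euc n → Euc n} {C t : ℝ} (ht : 0 ≤ t)
    (hmono : IsMonotoneMap u) (hlip : ∀ x y, ‖u x - u y‖ ≤ C * ‖x - y‖) (x y : Euc n) :
    ‖(x - t • u x) - (y - t • u y)‖ ≤ Real.sqrt (1 + t ^ 2 * C ^ 2) * ‖x - y‖ := by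
  have hrw : (x - t • u x) - (y - t • u y) = (x - y) - t • (u x - u y) := by
    rw [smul_sub]; abel
  rw [hrw]
  have h1 : 0 ≤ ⟪x - y, t • (u x - u y)⟫ := by
    rw [real_inner_smul_right]
    exact mul_nonneg ht (by rw [real_inner_comm]; exact hmono x y)
  have h2 : ‖t • (u x - u y)‖ ^ 2 ≤ t ^ 2 * (C ^ 2 * ‖x - y‖ ^ 2) := by
    rw [norm_smul, Real.norm_eq_abs, mul_pow, sq_abs]
    refine mul_le_mul_of_nonneg_left ?_ (sq_nonneg t)
    have h3 := hlip x y
    nlinarith [norm_nonneg (u x - u y), norm_nonneg (x - y)]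
  have hsq : ‖(x - y) - t • (u x - u y)‖ ^ 2 ≤ (1 + t ^ 2 * C ^ 2) * ‖x - y‖ ^ 2 := by
    rw [norm_sub_sq_real]
    nlinarith [norm_nonneg (x - y)]
  calc ‖(x - y) - t • (u x - u y)‖
      = Real.sqrt (‖(x - y) - t • (u x - u y)‖ ^ 2) := (Real.sqrt_sq (norm_nonneg _)).symm
    _ ≤ Real.sqrt ((1 + t ^ 2 * C ^ 2) * ‖x - y‖ ^ 2) := Real.sqrt_le_sqrt hsq
    _ = Real.sqrt (1 + t ^ 2 * C ^ 2) * ‖x - y‖ := by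
        rw [Real.sqrt_mul (by positivity), Real.sqrt_sq (norm_nonneg _)]

end AuxLemmas

/-- **Proposition 5.4**: let μ ∈ 𝓜(ℝⁿ, ℝⁿ) satisfy μ(ℝⁿ) = 0 and have finite
first moments.  Then μ belongs to the dual cone 𝒫 of the set of monotone maps
(∫⟨u, dμ⟩ ≥ 0 for every monotone u ∈ C¹(ℝⁿ, ℝⁿ)) iff ∫⟨x, dμ(x)⟩ = J(μ). -/
theorem mem_dualCone_monotone_iff {n : ℕ} (μ : VecMeas n n)
    (hzero : μ.totalZero) (hmom : μ.finiteFirstMoment) :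
    (∀ u : Euc n → Euc n, C1b u → IsMonotoneMap u → 0 ≤ μ.pair u) ↔
      μ.pair (fun x => x) = Jsup μ := by
  haveI := μ.finite
  set S := {r | ∃ f : Euc n → Euc n, C1b f ∧ C1Norm f ≤ 1 ∧ r = μ.pair f} with hS
  have hJ : Jsup μ = sSup S := rfl
  have hBdd : BddAbove S := jset_bddAbove μ hzero hmom
  have hidmem : μ.pair (fun x => x) ∈ S := ⟨fun x => x, C1b_id, C1Norm_id_le, rfl⟩
  have hle : μ.pair (fun x => x) ≤ Jsup μ := hJ ▸ le_csSup hBdd hidmem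
  constructor
  · intro hdual
    refine le_antisymm hle ?_
    rw [hJ]
    refine csSup_le ⟨_, hidmem⟩ ?_
    rintro r ⟨f, hf, hf1, rfl⟩
    obtain ⟨hfc, C, hC⟩ := hf
    have hd1 : ∀ x, ‖fderiv ℝ f x‖ ≤ 1 := fun x =>
      le_trans (le_ciSup ⟨C, by rintro _ ⟨y, rfl⟩; exact hC y⟩ x) hf1
    have hflip : ∀ x y : Euc n, ‖f x - f y‖ ≤ 1 * ‖x - y‖ := lip_of_bound hfc hd1
    have hmono : IsMonotoneMap (fun x => x - f x) := by
      intro x y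
      have hrw : (x - f x) - (y - f y) = (x - y) - (f x - f y) := by abel
      rw [hrw, inner_sub_left]
      have h1 := real_inner_le_norm (f x - f y) (x - y)
      have h2 := hflip x y
      have h3 := real_inner_self_eq_norm_mul_norm (x - y)
      nlinarith [norm_nonneg (x - y), norm_nonneg (f x - f y)]
    have hub : C1b (fun x : Euc n => x - f x) := by
      refine ⟨contDiff_id.sub hfc, 2, fderiv_bound_of_lip (by norm_num) (fun x y => ?_)⟩
      have h2 := hflip x y
      have hrw : (x - f x) - (y - f y) = (x - y) - (f x - f y) := by abel
      calc ‖(x - f x) - (y - f y)‖ = ‖(x - y) - (f x - f y)‖ := by rw [hrw]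
        _ ≤ ‖x - y‖ + ‖f x - f y‖ := norm_sub_le _ _
        _ ≤ 2 * ‖x - y‖ := by linarith
    have h0 := hdual _ hub hmono
    have heq1 : μ.pair (fun x => x - f x) = μ.pair (fun x => x) - 1 * μ.pair f := by
      have := pair_sub_smul μ hmom C1b_id ⟨hfc, C, hC⟩ 1
      simpa [one_smul] using this
    rw [heq1] at h0
    linarith
  · intro heq u hu hmono
    obtain ⟨huc, C0, hC0⟩ := hu
    set C := max C0 0 with hCdef
    have hC : (0:ℝ) ≤ C := le_max_right _ _
    have hC' : ∀ x, ‖fderiv ℝ u x‖ ≤ C := fun x => (hC0 x).trans (le_max_left _ _)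
    have hulip : ∀ x y : Euc n, ‖u x - u y‖ ≤ C * ‖x - y‖ := lip_of_bound huc hC'
    have hP0 : 0 ≤ μ.pair (fun x => x) := by
      rw [heq, hJ]
      refine le_csSup hBdd ⟨fun _ => 0, ⟨contDiff_const, 0, fun x => le_of_eq (by rw [fderiv_const_apply, norm_zero])⟩,
        ciSup_le fun x => by rw [fderiv_const_apply, norm_zero]; exact zero_le_one,
        by simp [VecMeas.pair]⟩
    have hmain : ∀ t : ℝ, 0 < t → t ≤ 1 →
        -μ.pair u ≤ t * (C ^ 2 * μ.pair (fun x => x)) := by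
      intro t ht ht1
      set L := Real.sqrt (1 + t ^ 2 * C ^ 2) with hLdef
      have hL2 : L ^ 2 = 1 + t ^ 2 * C ^ 2 := Real.sq_sqrt (by positivity)
      have hL1 : 1 ≤ L := by
        nlinarith [Real.sqrt_nonneg (1 + t ^ 2 * C ^ 2),
          mul_nonneg (mul_nonneg (sq_nonneg t) (sq_nonneg C)) (Real.sqrt_nonneg (1 + t ^ 2 * C ^ 2))]
      have hL0 : (0:ℝ) < L := lt_of_lt_of_le one_pos hL1
      have hglip : ∀ x y : Euc n, ‖(x - t • u x) - (y - t • u y)‖ ≤ L * ‖x - y‖ :=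
        lip_id_sub_smul ht.le hmono hulip
      have hgC1 : C1b (fun x : Euc n => x - t • u x) :=
        ⟨contDiff_id.sub (huc.const_smul t), L, fderiv_bound_of_lip hL0.le hglip⟩
      have hvlip : ∀ x y : Euc n,
          ‖(L⁻¹ • (x - t • u x)) - (L⁻¹ • (y - t • u y))‖ ≤ 1 * ‖x - y‖ := by
        intro x y
        rw [← smul_sub, norm_smul, Real.norm_eq_abs, abs_of_pos (inv_pos.2 hL0), one_mul]
        calc L⁻¹ * ‖(x - t • u x) - (y - t • u y)‖ ≤ L⁻¹ * (L * ‖x - y‖) :=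
              mul_le_mul_of_nonneg_left (hglip x y) (inv_nonneg.2 hL0.le)
          _ = ‖x - y‖ := by field_simp
      have hvC1 : C1b (fun x : Euc n => L⁻¹ • (x - t • u x)) :=
        ⟨(contDiff_id.sub (huc.const_smul t)).const_smul L⁻¹, 1,
          fderiv_bound_of_lip zero_le_one hvlip⟩
      have hvnorm : C1Norm (fun x : Euc n => L⁻¹ • (x - t • u x)) ≤ 1 :=
        ciSup_le (fderiv_bound_of_lip zero_le_one hvlip)
      have hvle : μ.pair (fun x : Euc n => L⁻¹ • (x - t • u x)) ≤ μ.pair (fun x => x) := by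
        rw [heq, hJ]
        exact le_csSup hBdd ⟨_, hvC1, hvnorm, rfl⟩
      have hps : μ.pair (fun x : Euc n => L⁻¹ • (x - t • u x)) =
          L⁻¹ * (μ.pair (fun x => x) - t * μ.pair u) := by
        rw [pair_smul μ hmom (g := fun x : Euc n => x - t • u x) hgC1 L⁻¹,
          pair_sub_smul μ hmom C1b_id ⟨huc, C0, hC0⟩ t]
      rw [hps] at hvle
      have hkey : μ.pair (fun x => x) - t * μ.pair u ≤ L * μ.pair (fun x => x) := by
        calc μ.pair (fun x => x) - t * μ.pair u
            = L * (L⁻¹ * (μ.pair (fun x => x) - t * μ.pair u)) := by field_simp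
          _ ≤ L * μ.pair (fun x => x) := mul_le_mul_of_nonneg_left hvle hL0.le
      have hLle : L ≤ 1 + t ^ 2 * C ^ 2 := by nlinarith
      have h5 : 0 ≤ (1 + t ^ 2 * C ^ 2 - L) * μ.pair (fun x => x) :=
        mul_nonneg (by linarith) hP0
      rw [← mul_le_mul_iff_right₀ ht]
      nlinarith
    by_contra hneg
    push_neg at hneg
    have hε : 0 < -μ.pair u := by linarith
    set K := C ^ 2 * μ.pair (fun x => x) with hK
    have hK0 : 0 ≤ K := mul_nonneg (sq_nonneg C) hP0
    have ht0 : 0 < min 1 ((-μ.pair u) / (2 * (K + 1))) :=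
      lt_min one_pos (div_pos hε (by linarith))
    have h6 := hmain _ ht0 (min_le_left _ _)
    have h7 : min 1 ((-μ.pair u) / (2 * (K + 1))) * K ≤ ((-μ.pair u) / (2 * (K + 1))) * K :=
      mul_le_mul_of_nonneg_right (min_le_right _ _) hK0
    have h8 : ((-μ.pair u) / (2 * (K + 1))) * K < -μ.pair u := by
      rw [div_mul_eq_mul_div, div_lt_iff₀ (by linarith : (0:ℝ) < 2 * (K + 1))]
      nlinarith [mul_nonneg hε.le hK0]
    linarith
end
end

section
/- Let f ∈ C¹(ℝ^n, ℝ^m) with ‖f‖_{C¹} = 1, and let μ be an ℝ^m-valued Borel measure on ℝ^n of finite total variation with μ(ℝ^n) = 0 and finite first moments. Then μ ∈ 𝒫_f (that is, J(μ) = ∫⟨f, dμ⟩) if and only if for every map h ∈ C¹(ℝ^n, ℝ^m) such that the Lipschitz constants λ_ε of f − εh satisfy liminf_{ε→0⁺} (1 − λ_ε)/ε ≥ 0, one has ∫⟨h, dμ⟩ ≥ 0. -/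
open Matrix MeasureTheory Filter
open scoped RealInnerProductSpace Topology

noncomputable section

/-! `J` is the support function of the unit ball of `C¹`, so `∫⟨k, dμ⟩ ≤ ‖k‖_{C¹} J(μ)` for
every `k`; this is finite because `μ(ℝⁿ) = 0` lets us replace `k` by `k - k(0)`, which grows at
most like `‖k‖_{C¹} ‖x‖`. If `J(μ) = ∫⟨f, dμ⟩`, taking `k = f - εh` gives
`(1 - λ_ε) J(μ) ≤ ε ∫⟨h, dμ⟩`, and dividing by `ε` and passing to the `liminf` yields
`∫⟨h, dμ⟩ ≥ 0`. Conversely, for `g` in the unit ball, `f - ε(f - g) = (1 - ε)f + εg` stays in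
the unit ball for `ε ∈ [0, 1]`, so `h = f - g` is admissible and `∫⟨g, dμ⟩ ≤ ∫⟨f, dμ⟩`. -/

variable {n m : ℕ}

namespace C1b

variable {g h : Euc n → Euc m}

lemma differentiable (hg : C1b g) : Differentiable ℝ g :=
  hg.1.differentiable one_ne_zero

lemma norm_fderiv_le (hg : C1b g) (x : Euc n) : ‖fderiv ℝ g x‖ ≤ C1Norm g := by
  obtain ⟨C, hC⟩ := hg.2
  exact le_ciSup ⟨C, by rintro _ ⟨y, rfl⟩; exact hC y⟩ x

lemma norm_sub_le (hg : C1b g) (x y : Euc n) : ‖g x - g y‖ ≤ C1Norm g * ‖x - y‖ :=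
  convex_univ.norm_image_sub_le_of_norm_fderiv_le (fun z _ => hg.differentiable z)
    (fun z _ => hg.norm_fderiv_le z) trivial trivial

lemma const (c : Euc m) : C1b fun _ : Euc n => c :=
  ⟨contDiff_const, 0, fun x => by simp⟩

lemma smul (hg : C1b g) (c : ℝ) : C1b fun x => c • g x := by
  obtain ⟨C, hC⟩ := hg.2
  refine ⟨hg.1.const_smul c, |c| * C, fun x => ?_⟩
  rw [fderiv_fun_const_smul (hg.differentiable x), norm_smul, Real.norm_eq_abs]
  exact mul_le_mul_of_nonneg_left (hC x) (abs_nonneg c)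

lemma sub (hg : C1b g) (hh : C1b h) : C1b fun x => g x - h x := by
  obtain ⟨C, hC⟩ := hg.2
  obtain ⟨D, hD⟩ := hh.2
  refine ⟨hg.1.sub hh.1, C + D, fun x => ?_⟩
  rw [fderiv_fun_sub (hg.differentiable x) (hh.differentiable x)]
  exact norm_sub_le_of_le (hC x) (hD x)

end C1b

section C1Norm

variable {g h : Euc n → Euc m}

lemma C1Norm_nonneg (g : Euc n → Euc m) : 0 ≤ C1Norm g :=
  Real.iSup_nonneg fun _ => norm_nonneg _

lemma C1Norm_le {C : ℝ} (hC : ∀ x, ‖fderiv ℝ g x‖ ≤ C) : C1Norm g ≤ C :=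
  ciSup_le hC

lemma C1Norm_smul_le (hg : C1b g) (c : ℝ) : C1Norm (fun x => c • g x) ≤ |c| * C1Norm g :=
  C1Norm_le fun x => by
    rw [fderiv_fun_const_smul (hg.differentiable x), norm_smul, Real.norm_eq_abs]
    exact mul_le_mul_of_nonneg_left (hg.norm_fderiv_le x) (abs_nonneg c)

lemma C1Norm_add_le (hg : C1b g) (hh : C1b h) :
    C1Norm (fun x => g x + h x) ≤ C1Norm g + C1Norm h :=
  C1Norm_le fun x => by
    rw [fderiv_fun_add (hg.differentiable x) (hh.differentiable x)]
    exact norm_add_le_of_le (hg.norm_fderiv_le x) (hh.norm_fderiv_le x)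

lemma abs_C1Norm_sub_smul_sub_le (hg : C1b g) (hh : C1b h) (ε : ℝ) :
    |C1Norm (fun x => g x - ε • h x) - C1Norm g| ≤ |ε| * C1Norm h := by
  have hk : C1b fun x => g x - ε • h x := hg.sub (hh.smul ε)
  have hupper : C1Norm (fun x => g x - ε • h x) ≤ C1Norm g + |ε| * C1Norm h := by
    have hneg : (fun x => g x - ε • h x) = fun x => g x + (-ε) • h x := by
      funext x
      rw [neg_smul, sub_eq_add_neg]
    rw [hneg, ← abs_neg ε]
    exact (C1Norm_add_le hg (hh.smul _)).trans (add_le_add le_rfl (C1Norm_smul_le hh _))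
  have hlower : C1Norm g ≤ C1Norm (fun x => g x - ε • h x) + |ε| * C1Norm h := by
    have := C1Norm_add_le hk (hh.smul ε)
    simp only [sub_add_cancel] at this
    exact this.trans (add_le_add le_rfl (C1Norm_smul_le hh ε))
  rw [abs_sub_le_iff]
  constructor <;> linarith

lemma eventually_abs_one_sub_C1Norm_sub_smul_div_le {f : Euc n → Euc m} (hf : C1b f)
    (hf1 : C1Norm f = 1) (hh : C1b h) :
    ∀ᶠ ε in 𝓝[>] (0 : ℝ), |(1 - C1Norm (fun x => f x - ε • h x)) / ε| ≤ C1Norm h := by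
  filter_upwards [eventually_mem_nhdsWithin] with ε (hε : 0 < ε)
  have := abs_C1Norm_sub_smul_sub_le hf hh ε
  rw [hf1, abs_sub_comm, abs_of_pos hε] at this
  rwa [abs_div, abs_of_pos hε, div_le_iff₀ hε, mul_comm]

lemma C1Norm_sub_smul_sub_le_one {f : Euc n → Euc m} (hf : C1b f) (hg : C1b g)
    (hf1 : C1Norm f ≤ 1) (hg1 : C1Norm g ≤ 1) {ε : ℝ} (hε₀ : 0 ≤ ε) (hε₁ : ε ≤ 1) :
    C1Norm (fun x => f x - ε • (f x - g x)) ≤ 1 := by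
  have hconvex : (fun x => f x - ε • (f x - g x)) = fun x => (1 - ε) • f x + ε • g x := by
    funext x
    module
  rw [hconvex]
  calc C1Norm (fun x => (1 - ε) • f x + ε • g x)
      ≤ |1 - ε| * C1Norm f + |ε| * C1Norm g :=
        (C1Norm_add_le (hf.smul _) (hg.smul _)).trans
          (add_le_add (C1Norm_smul_le hf _) (C1Norm_smul_le hg _))
    _ ≤ (1 - ε) * 1 + ε * 1 := by
        rw [abs_of_nonneg (sub_nonneg.2 hε₁), abs_of_nonneg hε₀]
        gcongr
    _ = 1 := by ring

lemma liminf_one_sub_C1Norm_sub_smul_sub_div_nonneg {f : Euc n → Euc m} (hf : C1b f)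
    (hg : C1b g) (hf1 : C1Norm f = 1) (hg1 : C1Norm g ≤ 1) :
    0 ≤ liminf (fun ε : ℝ => (1 - C1Norm (fun x => f x - ε • (f x - g x))) / ε) (𝓝[>] 0) := by
  refine le_liminf_of_le (isCoboundedUnder_ge_of_eventually_le _
    ((eventually_abs_one_sub_C1Norm_sub_smul_div_le hf hf1 (hf.sub hg)).mono
      fun _ => le_of_abs_le)) ?_
  filter_upwards [Ioc_mem_nhdsGT one_pos] with ε hε
  exact div_nonneg (sub_nonneg.2 (C1Norm_sub_smul_sub_le_one hf hg hf1.le hg1 hε.1.le hε.2))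
    hε.1.le

end C1Norm

namespace VecMeas

variable (μ : VecMeas n m) {g h : Euc n → Euc m}

lemma integrable_density : Integrable μ.density μ.var := by
  have := μ.finite
  refine (integrable_const 1).mono' μ.measurable_density.aestronglyMeasurable ?_
  filter_upwards [μ.norm_density] with x hx using hx.le

lemma integrable_inner (hmom : μ.finiteFirstMoment) (hg : C1b g) :
    Integrable (fun x => ⟪g x, μ.density x⟫) μ.var := by
  have := μ.finite
  refine ((integrable_const ‖g 0‖).add (hmom.const_mul (C1Norm g))).mono'
    (hg.1.continuous.measurable.inner μ.measurable_density).aestronglyMeasurable ?_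
  filter_upwards [μ.norm_density] with x hx
  calc ‖⟪g x, μ.density x⟫‖ ≤ ‖g x‖ * ‖μ.density x‖ := norm_inner_le_norm _ _
    _ = ‖g 0 + (g x - g 0)‖ := by rw [hx, mul_one, add_sub_cancel]
    _ ≤ ‖g 0‖ + C1Norm g * ‖x‖ :=
        norm_add_le_of_le le_rfl (by simpa using hg.norm_sub_le x 0)

lemma pair_smul (c : ℝ) : μ.pair (fun x => c • g x) = c * μ.pair g := by
  simp only [pair, real_inner_smul_left, integral_const_mul]

lemma pair_sub (hmom : μ.finiteFirstMoment) (hg : C1b g) (hh : C1b h) :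
    μ.pair (fun x => g x - h x) = μ.pair g - μ.pair h := by
  simp only [pair, inner_sub_left]
  exact integral_sub (μ.integrable_inner hmom hg) (μ.integrable_inner hmom hh)

lemma pair_const (hzero : μ.totalZero) (c : Euc m) : μ.pair (fun _ => c) = 0 := by
  rw [pair, integral_inner μ.integrable_density, hzero, inner_zero_right]

lemma pair_le_C1Norm_mul_integral_norm (hzero : μ.totalZero) (hmom : μ.finiteFirstMoment)
    (hg : C1b g) : μ.pair g ≤ C1Norm g * ∫ x, ‖x‖ ∂μ.var := by
  have hshift : μ.pair g = μ.pair (fun x => g x - g 0) := by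
    rw [μ.pair_sub hmom hg (C1b.const _), μ.pair_const hzero, sub_zero]
  rw [hshift, pair, ← integral_const_mul]
  refine integral_mono_ae (μ.integrable_inner hmom (hg.sub (C1b.const _)))
    (hmom.const_mul _) ?_
  filter_upwards [μ.norm_density] with x hx
  calc ⟪g x - g 0, μ.density x⟫ ≤ ‖g x - g 0‖ * ‖μ.density x‖ := real_inner_le_norm _ _
    _ ≤ C1Norm g * ‖x‖ := by simpa [hx] using hg.norm_sub_le x 0

end VecMeas

section Jsup

variable {μ : VecMeas n m} {g : Euc n → Euc m}

lemma le_Jsup (hzero : μ.totalZero) (hmom : μ.finiteFirstMoment) (hg : C1b g)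
    (hg1 : C1Norm g ≤ 1) : μ.pair g ≤ Jsup μ := by
  refine le_csSup ⟨∫ x, ‖x‖ ∂μ.var, ?_⟩ ⟨g, hg, hg1, rfl⟩
  rintro _ ⟨k, hk, hk1, rfl⟩
  calc μ.pair k ≤ C1Norm k * ∫ x, ‖x‖ ∂μ.var := μ.pair_le_C1Norm_mul_integral_norm hzero hmom hk
    _ ≤ 1 * ∫ x, ‖x‖ ∂μ.var := by gcongr
    _ = ∫ x, ‖x‖ ∂μ.var := one_mul _

lemma Jsup_le {a : ℝ} (H : ∀ g, C1b g → C1Norm g ≤ 1 → μ.pair g ≤ a) : Jsup μ ≤ a :=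
  csSup_le ⟨_, 0, C1b.const 0, C1Norm_le (by simp), rfl⟩ <| by
    rintro _ ⟨g, hg, hg1, rfl⟩
    exact H g hg hg1

lemma Jsup_nonneg (hzero : μ.totalZero) (hmom : μ.finiteFirstMoment) : 0 ≤ Jsup μ := by
  simpa [VecMeas.pair] using
    le_Jsup hzero hmom (C1b.const (n := n) (0 : Euc m)) (C1Norm_le (by simp))

lemma pair_le_C1Norm_mul_Jsup (hzero : μ.totalZero) (hmom : μ.finiteFirstMoment) (hg : C1b g) :
    μ.pair g ≤ C1Norm g * Jsup μ := by
  rcases (C1Norm_nonneg g).eq_or_lt with hnorm | hnorm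
  · simpa [← hnorm] using μ.pair_le_C1Norm_mul_integral_norm hzero hmom hg
  · have hscaled : C1Norm (fun x => (C1Norm g)⁻¹ • g x) ≤ 1 := by
      refine (C1Norm_smul_le hg _).trans ?_
      rw [abs_of_pos (inv_pos.2 hnorm), inv_mul_cancel₀ hnorm.ne']
    have := le_Jsup hzero hmom (hg.smul _) hscaled
    rwa [μ.pair_smul, inv_mul_le_iff₀ hnorm] at this

end Jsup

lemma nonneg_of_liminf_nonneg_of_eventually_mul_le {α : Type*} {l : Filter α} [l.NeBot]
    {u : α → ℝ} {c b : ℝ} (hc : 0 ≤ c) (hu : IsBoundedUnder (· ≥ ·) l u)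
    (hle : ∀ᶠ x in l, u x * c ≤ b) (hlim : 0 ≤ liminf u l) : 0 ≤ b := by
  rcases hc.eq_or_lt with rfl | hc
  · obtain ⟨x, hx⟩ := hle.exists
    simpa using hx
  · have : liminf u l ≤ b / c :=
      liminf_le_of_frequently_le (hle.mono fun x hx => (le_div_iff₀ hc).2 hx).frequently hu
    simpa using (le_div_iff₀ hc).1 (hlim.trans this)

/-- **Proposition 6.2**: let f ∈ C¹(ℝⁿ, ℝᵐ) with ‖f‖_{C¹} = 1 and let
μ ∈ 𝓜(ℝⁿ, ℝᵐ) have μ(ℝⁿ) = 0 and finite first moments.  Then μ ∈ 𝒫_f, i.e.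
J(μ) = ∫⟨f, dμ⟩, iff for every h ∈ C¹(ℝⁿ, ℝᵐ) whose Lipschitz constants
λ_ε = ‖f − εh‖_{C¹} satisfy liminf_{ε→0⁺} (1 − λ_ε)/ε ≥ 0 one has
∫⟨h, dμ⟩ ≥ 0. -/
theorem mem_polarCone_C1_iff {n m : ℕ} (f : Euc n → Euc m)
    (hf : C1b f) (hf1 : C1Norm f = 1)
    (μ : VecMeas n m) (hzero : μ.totalZero) (hmom : μ.finiteFirstMoment) :
    Jsup μ = μ.pair f ↔
      ∀ h : Euc n → Euc m, C1b h →
        (0 : ℝ) ≤ liminf (fun ε : ℝ => (1 - C1Norm (fun x => f x - ε • h x)) / ε)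
            (nhdsWithin 0 (Set.Ioi 0)) →
        0 ≤ μ.pair h := by
  constructor
  · intro hJ h hh hlim
    refine nonneg_of_liminf_nonneg_of_eventually_mul_le (Jsup_nonneg hzero hmom)
      (isBoundedUnder_of_eventually_ge ((eventually_abs_one_sub_C1Norm_sub_smul_div_le hf hf1
        hh).mono fun _ => neg_le_of_abs_le)) ?_ hlim
    filter_upwards [eventually_mem_nhdsWithin] with ε (hε : 0 < ε)
    have hperturb := pair_le_C1Norm_mul_Jsup hzero hmom (hf.sub (hh.smul ε))
    rw [μ.pair_sub hmom hf (hh.smul ε), μ.pair_smul, hJ] at hperturb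
    rw [div_mul_eq_mul_div, div_le_iff₀ hε, hJ]
    linarith
  · intro H
    refine le_antisymm (Jsup_le fun g hg hg1 => ?_) (le_Jsup hzero hmom hf hf1.le)
    have hadmissible := H _ (hf.sub hg)
      (liminf_one_sub_C1Norm_sub_smul_sub_div_nonneg hf hg hf1 hg1)
    rw [μ.pair_sub hmom hf hg] at hadmissible
    linarith
end
end
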